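/- If p + q ≤ n, then Ω^p_{ℙ^n} ⊗ Ω^q_{ℙ^n} has the same cohomology as Ω^{p+q}_{ℙ^n}: its cohomology vanishes in all degrees except p+q, and H^{p+q}(ℙ^n, Ω^p ⊗ Ω^q) ≅ ℂ. -/

import Mathlib

open Finset

namespace TensorForms

/-!
We model the cohomology of `Ω^p_{ℙⁿ} ⊗ Ω^q_{ℙⁿ}` by the Čech complex of the standard
affine cover `U_i = {x_i ≠ 0}` of `ℙⁿ`.  In homogeneous coordinates, a section of
`Ω^p ⊗ Ω^q` over `U_S = ⋂_{i ∈ S} U_i` is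
`ω = ∑_{T₁, T₂} c_{T₁,T₂} (dx_{T₁}) ⊗ (dx_{T₂})`, summed over pairs of a `p`-element
subset `T₁` and a `q`-element subset `T₂` of `{0, …, n}`, with Laurent polynomial
coefficients with poles only at `x_i`, `i ∈ S`, homogeneous of total degree `−(p+q)`,
annihilated by contraction with the Euler vector field `E = ∑ x_i ∂/∂x_i` in each of the
two tensor slots.
-/

/-- Laurent polynomials in `x_0, …, x_n`, recorded by coefficient functions. -/
abbrev Laurent (n : ℕ) := (Fin (n + 1) → ℤ) →₀ ℂ

/-- An element of `Λ^p ⊗ Λ^q`: a Laurent coefficient for each pair of a `p`-subset and a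
`q`-subset. -/
abbrev Form (n p q : ℕ) :=
  {T : Finset (Fin (n + 1)) // T.card = p} × {T : Finset (Fin (n + 1)) // T.card = q} →
    Laurent n

/-- The exponent of the monomial `x_i`. -/
def single (n : ℕ) (i : Fin (n + 1)) : Fin (n + 1) → ℤ := fun j => if j = i then 1 else 0

/-- `ω` is a section of `Ω^p ⊗ Ω^q` over the chart intersection `U_S`: all monomials have
nonnegative exponents outside `S` and total degree `−(p+q)`, and the Euler contraction of
`ω` in each tensor slot vanishes. -/
def IsSection (n p q : ℕ) (S : Finset (Fin (n + 1))) (ω : Form n p q) : Prop :=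
  (∀ T a, ω T a ≠ 0 → (∀ i ∉ S, 0 ≤ a i) ∧ (∑ i, a i) = -(p + q : ℤ)) ∧
  (∀ U : Finset (Fin (n + 1)), ∀ hU : U.card + 1 = p,
    ∀ T₂ : {T : Finset (Fin (n + 1)) // T.card = q}, ∀ b : Fin (n + 1) → ℤ,
    ∑ i ∈ Uᶜ.attach,
      (-1 : ℂ) ^ (U.filter (fun j => j < i.1)).card *
        ω (⟨insert i.1 U, by
            rw [card_insert_of_notMem (Finset.mem_compl.mp i.2)]; exact hU⟩, T₂)
          (b - single n i.1) = 0) ∧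
  (∀ T₁ : {T : Finset (Fin (n + 1)) // T.card = p},
    ∀ U : Finset (Fin (n + 1)), ∀ hU : U.card + 1 = q, ∀ b : Fin (n + 1) → ℤ,
    ∑ i ∈ Uᶜ.attach,
      (-1 : ℂ) ^ (U.filter (fun j => j < i.1)).card *
        ω (T₁, ⟨insert i.1 U, by
            rw [card_insert_of_notMem (Finset.mem_compl.mp i.2)]; exact hU⟩)
          (b - single n i.1) = 0)

/-- A Čech `k`-cochain for the standard cover. -/
abbrev Cochain (n p q k : ℕ) :=
  {S : Finset (Fin (n + 1)) // S.card = k + 1} → Form n p q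

/-- A Čech cochain whose every component is a section over the corresponding chart. -/
def IsCochain (n p q : ℕ) {k : ℕ} (ω : Cochain n p q k) : Prop :=
  ∀ S, IsSection n p q S.1 (ω S)

/-- The Čech differential `(dω)_S = ∑_{i ∈ S} (−1)^{#{j ∈ S | j < i}} ω_{S \ {i}}`. -/
noncomputable def cechD {n p q k : ℕ} (ω : Cochain n p q k) : Cochain n p q (k + 1) :=
  fun S => ∑ i ∈ S.1.attach,
    (-1 : ℂ) ^ (S.1.filter (fun j => j < i.1)).card •
      ω ⟨S.1.erase i.1, by rw [card_erase_of_mem i.2, S.2]; omega⟩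

/-- `ω` is a Čech coboundary (in degree `0`, this means `ω = 0`). -/
def IsCoboundary (n p q : ℕ) : ∀ {k : ℕ}, Cochain n p q k → Prop
  | 0, ω => ω = 0
  | (_ + 1), ω => ∃ η, IsCochain n p q η ∧ cechD η = ω


/-! ### Sign combinatorics -/

variable {n : ℕ}

/-- The Čech/Koszul sign. -/
def eps (i : Fin (n + 1)) (s : Finset (Fin (n + 1))) : ℂ :=
  (-1 : ℂ) ^ (s.filter (fun j => j < i)).card

/-- Comparison sign. -/
def sw (i l : Fin (n + 1)) : ℂ := if i < l then -1 else 1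

lemma eps_sq (i : Fin (n + 1)) (s : Finset (Fin (n + 1))) : eps i s * eps i s = 1 := by
  unfold eps; rw [← pow_add]; exact Even.neg_one_pow ⟨_, rfl⟩

lemma eps_ne_zero (i : Fin (n + 1)) (s : Finset (Fin (n + 1))) : eps i s ≠ 0 :=
  pow_ne_zero _ (by norm_num)

lemma sw_sq (i l : Fin (n + 1)) : sw i l * sw i l = 1 := by
  unfold sw; split <;> norm_num

lemma sw_antisymm {i l : Fin (n + 1)} (h : i ≠ l) : sw l i = - sw i l := by
  unfold sw
  rcases lt_or_gt_of_ne h with h' | h'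
  · rw [if_neg (asymm h'), if_pos h']; try norm_num
  · rw [if_pos h', if_neg (asymm h')]; try norm_num

lemma sw_self (i : Fin (n + 1)) : sw i i = 1 := by simp [sw]

lemma eps_insert {i : Fin (n + 1)} {s : Finset (Fin (n + 1))} (h : i ∉ s) (l : Fin (n + 1)) :
    eps l (insert i s) = sw i l * eps l s := by
  unfold eps sw
  rw [Finset.filter_insert]
  split
  · rw [Finset.card_insert_of_notMem (fun hc => h (Finset.mem_of_mem_filter i hc)), pow_succ]
    ring
  · try ring

lemma eps_erase {i : Fin (n + 1)} {s : Finset (Fin (n + 1))} (h : i ∈ s) (l : Fin (n + 1)) :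
    eps l s = sw i l * eps l (s.erase i) := by
  conv_lhs => rw [← Finset.insert_erase h]
  rw [eps_insert (Finset.notMem_erase i s) l]

lemma eps_erase' {i : Fin (n + 1)} {s : Finset (Fin (n + 1))} (h : i ∈ s) (l : Fin (n + 1)) :
    eps l (s.erase i) = sw i l * eps l s := by
  rw [eps_erase h l, ← mul_assoc, sw_sq, one_mul]

lemma eps_insert_self {i : Fin (n + 1)} {s : Finset (Fin (n + 1))} (h : i ∉ s) :
    eps i (insert i s) = eps i s := by
  rw [eps_insert h, sw_self, one_mul]

lemma eps_erase_self {i : Fin (n + 1)} {s : Finset (Fin (n + 1))} (h : i ∈ s) :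
    eps i (s.erase i) = eps i s := by
  rw [eps_erase' h, sw_self, one_mul]

lemma sum_pair_antisymm (s : Finset (Fin (n + 1))) (F : Fin (n + 1) → Fin (n + 1) → ℂ)
    (hF : ∀ i ∈ s, ∀ l ∈ s, i ≠ l → F i l = - F l i) :
    ∑ i ∈ s, ∑ l ∈ s.erase i, F i l = 0 := by
  have key : ∑ i ∈ s, ∑ l ∈ s.erase i, F i l = ∑ i ∈ s, ∑ l ∈ s.erase i, F l i := by
    rw [Finset.sum_sigma', Finset.sum_sigma']
    refine Finset.sum_nbij' (fun x => ⟨x.2, x.1⟩) (fun x => ⟨x.2, x.1⟩) ?_ ?_ ?_ ?_ ?_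
    · rintro ⟨x1, x2⟩ hx
      simp only [Finset.mem_sigma, Finset.mem_erase] at hx ⊢
      exact ⟨hx.2.2, hx.2.1.symm, hx.1⟩
    · rintro ⟨x1, x2⟩ hx
      simp only [Finset.mem_sigma, Finset.mem_erase] at hx ⊢
      exact ⟨hx.2.2, hx.2.1.symm, hx.1⟩
    · rintro ⟨x1, x2⟩ _; rfl
    · rintro ⟨x1, x2⟩ _; rfl
    · rintro ⟨x1, x2⟩ _; rfl
  have h2 : ∑ i ∈ s, ∑ l ∈ s.erase i, F i l = - ∑ i ∈ s, ∑ l ∈ s.erase i, F i l := by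
    conv_lhs => rw [key]
    rw [← Finset.sum_neg_distrib]
    refine Finset.sum_congr rfl fun i hi => ?_
    rw [← Finset.sum_neg_distrib]
    refine Finset.sum_congr rfl fun l hl => ?_
    rw [hF l (Finset.mem_of_mem_erase hl) i hi (Finset.ne_of_mem_erase hl)]
  linear_combination (1 / 2 : ℂ) * h2

/-! ### Evaluation of the Čech differential -/

/-- Raw evaluation of a cochain on a plain finset. -/
noncomputable def rc {p q k : ℕ} (ω : Cochain n p q k) (s : Finset (Fin (n + 1)))
    (T : {T : Finset (Fin (n + 1)) // T.card = p} × {T : Finset (Fin (n + 1)) // T.card = q})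
    (a : Fin (n + 1) → ℤ) : ℂ :=
  if h : s.card = k + 1 then ω ⟨s, h⟩ T a else 0

lemma rc_eq {p q k : ℕ} (ω : Cochain n p q k) {s : Finset (Fin (n + 1))} (h : s.card = k + 1)
    (T : _) (a : _) : rc ω s T a = ω ⟨s, h⟩ T a := dif_pos h

lemma cechD_apply {p q k : ℕ} (ω : Cochain n p q k) (s : Finset (Fin (n + 1)))
    (hs : s.card = k + 2) (T : _) (a : _) :
    cechD ω ⟨s, hs⟩ T a = ∑ i ∈ s, eps i s * rc ω (s.erase i) T a := by
  unfold cechD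
  rw [Finset.sum_apply, Finsupp.finset_sum_apply, ← Finset.sum_attach s
    (fun i => eps i s * rc ω (s.erase i) T a)]
  refine Finset.sum_congr rfl fun i _ => ?_
  rw [Pi.smul_apply, Finsupp.smul_apply, smul_eq_mul,
    rc_eq ω (by rw [Finset.card_erase_of_mem i.2, hs]; omega)]
  rfl

lemma rc_sub {p q k : ℕ} (ω η : Cochain n p q k) (s T a) :
    rc (ω - η) s T a = rc ω s T a - rc η s T a := by
  unfold rc; split <;> simp

lemma rc_smul {p q k : ℕ} (c : ℂ) (ω : Cochain n p q k) (s T a) :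
    rc (c • ω) s T a = c * rc ω s T a := by
  unfold rc; split <;> simp

lemma cochain_ext {p q k : ℕ} {ω η : Cochain n p q k}
    (h : ∀ s (hs : s.card = k + 1) T a, ω ⟨s, hs⟩ T a = η ⟨s, hs⟩ T a) : ω = η := by
  funext S T
  obtain ⟨s, hs⟩ := S
  exact Finsupp.ext fun a => h s hs T a

lemma cechD_sub {p q k : ℕ} (ω η : Cochain n p q k) :
    cechD (ω - η) = cechD ω - cechD η := by
  refine cochain_ext fun s hs T a => ?_
  have : ((cechD ω - cechD η) ⟨s, hs⟩) T a = cechD ω ⟨s, hs⟩ T a - cechD η ⟨s, hs⟩ T a := by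
    simp
  rw [this, cechD_apply _ s hs, cechD_apply _ s hs, cechD_apply _ s hs,
    ← Finset.sum_sub_distrib]
  refine Finset.sum_congr rfl fun i _ => ?_
  rw [rc_sub, mul_sub]

lemma cechD_smul {p q k : ℕ} (c : ℂ) (ω : Cochain n p q k) :
    cechD (c • ω) = c • cechD ω := by
  refine cochain_ext fun s hs T a => ?_
  have : ((c • cechD ω) ⟨s, hs⟩) T a = c * cechD ω ⟨s, hs⟩ T a := by simp
  rw [this, cechD_apply _ s hs, cechD_apply _ s hs, Finset.mul_sum]
  refine Finset.sum_congr rfl fun i _ => ?_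
  rw [rc_smul]; ring

lemma cechD_cechD {p q k : ℕ} (ω : Cochain n p q k) : cechD (cechD ω) = 0 := by
  refine cochain_ext fun s hs T a => ?_
  have hz : ((0 : Cochain n p q (k + 2)) ⟨s, hs⟩) T a = 0 := rfl
  rw [hz, cechD_apply _ s hs]
  have step : ∀ i ∈ s, eps i s * rc (cechD ω) (s.erase i) T a =
      ∑ l ∈ s.erase i, eps i s * eps l (s.erase i) * rc ω ((s.erase i).erase l) T a := by
    intro i hi
    have hc : (s.erase i).card = k + 2 := by rw [Finset.card_erase_of_mem hi, hs]; omega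
    rw [rc_eq (cechD ω) hc, cechD_apply _ _ hc, Finset.mul_sum]
    refine Finset.sum_congr rfl fun l _ => ?_
    · ring
  rw [Finset.sum_congr rfl step]
  refine sum_pair_antisymm s _ fun i hi l hl hne => ?_
  have hv : (s.erase i).erase l = (s.erase l).erase i := Finset.erase_right_comm
  rw [hv, eps_erase' hi l, eps_erase' hl i, sw_antisymm hne]
  ring

/-! ### Generalized sections: Euler conditions as flags, general degree -/

/-- Raw evaluation of a form on plain finsets. -/
noncomputable def rf {p q : ℕ} (x : Form n p q) (T₁ T₂ : Finset (Fin (n + 1)))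
    (a : Fin (n + 1) → ℤ) : ℂ :=
  if h : T₁.card = p ∧ T₂.card = q then x (⟨T₁, h.1⟩, ⟨T₂, h.2⟩) a else 0

lemma rf_eq {p q : ℕ} (x : Form n p q) {T₁ T₂ : Finset (Fin (n + 1))}
    (h₁ : T₁.card = p) (h₂ : T₂.card = q) (a : Fin (n + 1) → ℤ) :
    rf x T₁ T₂ a = x (⟨T₁, h₁⟩, ⟨T₂, h₂⟩) a := dif_pos ⟨h₁, h₂⟩

/-- Euler contraction vanishing in the first slot. -/
def Eul1 (p q : ℕ) (x : Form n p q) : Prop :=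
  ∀ U : Finset (Fin (n + 1)), ∀ hU : U.card + 1 = p,
    ∀ T₂ : {T : Finset (Fin (n + 1)) // T.card = q}, ∀ b : Fin (n + 1) → ℤ,
    ∑ i ∈ Uᶜ.attach,
      (-1 : ℂ) ^ (U.filter (fun j => j < i.1)).card *
        x (⟨insert i.1 U, by
            rw [card_insert_of_notMem (Finset.mem_compl.mp i.2)]; exact hU⟩, T₂)
          (b - single n i.1) = 0

/-- Euler contraction vanishing in the second slot. -/
def Eul2 (p q : ℕ) (x : Form n p q) : Prop :=
  ∀ T₁ : {T : Finset (Fin (n + 1)) // T.card = p},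
    ∀ U : Finset (Fin (n + 1)), ∀ hU : U.card + 1 = q, ∀ b : Fin (n + 1) → ℤ,
    ∑ i ∈ Uᶜ.attach,
      (-1 : ℂ) ^ (U.filter (fun j => j < i.1)).card *
        x (T₁, ⟨insert i.1 U, by
            rw [card_insert_of_notMem (Finset.mem_compl.mp i.2)]; exact hU⟩)
          (b - single n i.1) = 0

lemma eul1_sum_eq {p q : ℕ} (x : Form n p q) (U : Finset (Fin (n + 1))) (hU : U.card + 1 = p)
    (T₂ : {T : Finset (Fin (n + 1)) // T.card = q}) (b : Fin (n + 1) → ℤ) :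
    (∑ i ∈ Uᶜ.attach,
      (-1 : ℂ) ^ (U.filter (fun j => j < i.1)).card *
        x (⟨insert i.1 U, by
            rw [card_insert_of_notMem (Finset.mem_compl.mp i.2)]; exact hU⟩, T₂)
          (b - single n i.1))
    = ∑ i ∈ Uᶜ, eps i U * rf x (insert i U) T₂.1 (b - single n i) := by
  rw [← Finset.sum_attach Uᶜ (fun i => eps i U * rf x (insert i U) T₂.1 (b - single n i))]
  refine Finset.sum_congr rfl fun i _ => ?_
  have hi : i.1 ∉ U := Finset.mem_compl.mp i.2
  have hc : (insert i.1 U).card = p :=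
    by rw [card_insert_of_notMem hi]; exact hU
  rw [rf_eq x hc T₂.2]
  rfl

lemma eul2_sum_eq {p q : ℕ} (x : Form n p q) (T₁ : {T : Finset (Fin (n + 1)) // T.card = p})
    (U : Finset (Fin (n + 1))) (hU : U.card + 1 = q) (b : Fin (n + 1) → ℤ) :
    (∑ i ∈ Uᶜ.attach,
      (-1 : ℂ) ^ (U.filter (fun j => j < i.1)).card *
        x (T₁, ⟨insert i.1 U, by
            rw [card_insert_of_notMem (Finset.mem_compl.mp i.2)]; exact hU⟩)
          (b - single n i.1))
    = ∑ i ∈ Uᶜ, eps i U * rf x T₁.1 (insert i U) (b - single n i) := by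
  rw [← Finset.sum_attach Uᶜ (fun i => eps i U * rf x T₁.1 (insert i U) (b - single n i))]
  refine Finset.sum_congr rfl fun i _ => ?_
  have hi : i.1 ∉ U := Finset.mem_compl.mp i.2
  have hc : (insert i.1 U).card = q :=
    by rw [card_insert_of_notMem hi]; exact hU
  rw [rf_eq x T₁.2 hc]
  rfl

lemma eul1_iff {p q : ℕ} (x : Form n p q) :
    Eul1 p q x ↔ ∀ U : Finset (Fin (n + 1)), U.card + 1 = p →
      ∀ T₂ : Finset (Fin (n + 1)), T₂.card = q → ∀ b : Fin (n + 1) → ℤ,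
      ∑ i ∈ Uᶜ, eps i U * rf x (insert i U) T₂ (b - single n i) = 0 := by
  constructor
  · intro h U hU T₂ hT₂ b
    have h0 := h U hU ⟨T₂, hT₂⟩ b
    rw [eul1_sum_eq x U hU ⟨T₂, hT₂⟩ b] at h0
    exact h0
  · intro h U hU T₂ b
    rw [eul1_sum_eq x U hU T₂ b]
    exact h U hU T₂.1 T₂.2 b

lemma eul2_iff {p q : ℕ} (x : Form n p q) :
    Eul2 p q x ↔ ∀ T₁ : Finset (Fin (n + 1)), T₁.card = p →
      ∀ U : Finset (Fin (n + 1)), U.card + 1 = q → ∀ b : Fin (n + 1) → ℤ,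
      ∑ i ∈ Uᶜ, eps i U * rf x T₁ (insert i U) (b - single n i) = 0 := by
  constructor
  · intro h T₁ hT₁ U hU b
    have h0 := h ⟨T₁, hT₁⟩ U hU b
    rw [eul2_sum_eq x ⟨T₁, hT₁⟩ U hU b] at h0
    exact h0
  · intro h T₁ U hU b
    rw [eul2_sum_eq x T₁ U hU b]
    exact h T₁.1 T₁.2 U hU b

/-- Generalized section predicate: poles in `S`, degree `d`, Euler conditions per flags. -/
def GSect (e₁ e₂ : Bool) (d : ℤ) (p q : ℕ) (S : Finset (Fin (n + 1))) (x : Form n p q) : Prop :=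
  (∀ T a, x T a ≠ 0 → (∀ i ∉ S, 0 ≤ a i) ∧ (∑ i, a i) = d) ∧
  (e₁ = true → Eul1 p q x) ∧ (e₂ = true → Eul2 p q x)

lemma isSection_iff {p q : ℕ} (S : Finset (Fin (n + 1))) (x : Form n p q) :
    IsSection n p q S x ↔ GSect true true (-(p + q : ℤ)) p q S x := by
  constructor
  · rintro ⟨h1, h2, h3⟩; exact ⟨h1, fun _ => h2, fun _ => h3⟩
  · rintro ⟨h1, h2, h3⟩; exact ⟨h1, h2 rfl, h3 rfl⟩

lemma eul1_zero {p q : ℕ} : Eul1 p q (0 : Form n p q) := by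
  intro U hU T₂ b
  simp

lemma eul2_zero {p q : ℕ} : Eul2 p q (0 : Form n p q) := by
  intro T₁ U hU b
  simp

lemma eul1_add {p q : ℕ} {x y : Form n p q} (hx : Eul1 p q x) (hy : Eul1 p q y) :
    Eul1 p q (x + y) := by
  intro U hU T₂ b
  have hd : ∀ i ∈ Uᶜ.attach, (-1 : ℂ) ^ (U.filter (fun j => j < i.1)).card *
      (x + y) (⟨insert i.1 U, by
        rw [card_insert_of_notMem (Finset.mem_compl.mp i.2)]; exact hU⟩, T₂) (b - single n i.1)
      = (-1 : ℂ) ^ (U.filter (fun j => j < i.1)).card *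
      x (⟨insert i.1 U, by
        rw [card_insert_of_notMem (Finset.mem_compl.mp i.2)]; exact hU⟩, T₂) (b - single n i.1)
      + (-1 : ℂ) ^ (U.filter (fun j => j < i.1)).card *
      y (⟨insert i.1 U, by
        rw [card_insert_of_notMem (Finset.mem_compl.mp i.2)]; exact hU⟩, T₂) (b - single n i.1) := by
    intro i _
    have : (x + y) (⟨insert i.1 U, by
        rw [card_insert_of_notMem (Finset.mem_compl.mp i.2)]; exact hU⟩, T₂) (b - single n i.1)
        = x (⟨insert i.1 U, by
        rw [card_insert_of_notMem (Finset.mem_compl.mp i.2)]; exact hU⟩, T₂) (b - single n i.1)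
        + y (⟨insert i.1 U, by
        rw [card_insert_of_notMem (Finset.mem_compl.mp i.2)]; exact hU⟩, T₂) (b - single n i.1) := by
      simp
    rw [this]; ring
  rw [Finset.sum_congr rfl hd, Finset.sum_add_distrib, hx U hU T₂ b, hy U hU T₂ b, add_zero]

lemma eul2_add {p q : ℕ} {x y : Form n p q} (hx : Eul2 p q x) (hy : Eul2 p q y) :
    Eul2 p q (x + y) := by
  intro T₁ U hU b
  rw [eul2_sum_eq (x + y) T₁ U hU b]
  have hd : ∀ i ∈ Uᶜ, eps i U * rf (x + y) T₁.1 (insert i U) (b - single n i)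
      = eps i U * rf x T₁.1 (insert i U) (b - single n i)
      + eps i U * rf y T₁.1 (insert i U) (b - single n i) := by
    intro i hi
    have hc : (insert i U).card = q := by
      rw [card_insert_of_notMem (Finset.mem_compl.mp hi)]; exact hU
    rw [rf_eq _ T₁.2 hc, rf_eq x T₁.2 hc, rf_eq y T₁.2 hc]
    have : (x + y) (T₁, ⟨insert i U, hc⟩) (b - single n i)
        = x (T₁, ⟨insert i U, hc⟩) (b - single n i) + y (T₁, ⟨insert i U, hc⟩) (b - single n i) := by
      simp
    rw [this]; ring
  rw [Finset.sum_congr rfl hd, Finset.sum_add_distrib,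
    (eul2_iff x).mp hx T₁.1 T₁.2 U hU b, (eul2_iff y).mp hy T₁.1 T₁.2 U hU b, add_zero]

lemma eul1_smul {p q : ℕ} (c : ℂ) {x : Form n p q} (hx : Eul1 p q x) : Eul1 p q (c • x) := by
  rw [eul1_iff]
  intro U hU T₂ hT₂ b
  have hd : ∀ i ∈ Uᶜ, eps i U * rf (c • x) (insert i U) T₂ (b - single n i)
      = c * (eps i U * rf x (insert i U) T₂ (b - single n i)) := by
    intro i hi
    have hc : (insert i U).card = p := by
      rw [card_insert_of_notMem (Finset.mem_compl.mp hi)]; exact hU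
    rw [rf_eq _ hc hT₂, rf_eq x hc hT₂]
    have : (c • x) (⟨insert i U, hc⟩, ⟨T₂, hT₂⟩) (b - single n i)
        = c * x (⟨insert i U, hc⟩, ⟨T₂, hT₂⟩) (b - single n i) := by simp
    rw [this]; ring
  rw [Finset.sum_congr rfl hd, ← Finset.mul_sum,
    (eul1_iff x).mp hx U hU T₂ hT₂ b, mul_zero]

lemma eul2_smul {p q : ℕ} (c : ℂ) {x : Form n p q} (hx : Eul2 p q x) : Eul2 p q (c • x) := by
  rw [eul2_iff]
  intro T₁ hT₁ U hU b
  have hd : ∀ i ∈ Uᶜ, eps i U * rf (c • x) T₁ (insert i U) (b - single n i)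
      = c * (eps i U * rf x T₁ (insert i U) (b - single n i)) := by
    intro i hi
    have hc : (insert i U).card = q := by
      rw [card_insert_of_notMem (Finset.mem_compl.mp hi)]; exact hU
    rw [rf_eq _ hT₁ hc, rf_eq x hT₁ hc]
    have : (c • x) (⟨T₁, hT₁⟩, ⟨insert i U, hc⟩) (b - single n i)
        = c * x (⟨T₁, hT₁⟩, ⟨insert i U, hc⟩) (b - single n i) := by simp
    rw [this]; ring
  rw [Finset.sum_congr rfl hd, ← Finset.mul_sum,
    (eul2_iff x).mp hx T₁ hT₁ U hU b, mul_zero]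

/-! ### Closure properties of `GSect` -/

lemma gsect_zero {e₁ e₂ : Bool} {d : ℤ} {p q : ℕ} {S : Finset (Fin (n + 1))} :
    GSect e₁ e₂ d p q S (0 : Form n p q) := by
  refine ⟨fun T a h => absurd rfl h, fun _ => eul1_zero, fun _ => eul2_zero⟩

lemma gsect_add {e₁ e₂ : Bool} {d : ℤ} {p q : ℕ} {S : Finset (Fin (n + 1))}
    {x y : Form n p q} (hx : GSect e₁ e₂ d p q S x) (hy : GSect e₁ e₂ d p q S y) :
    GSect e₁ e₂ d p q S (x + y) := by
  refine ⟨fun T a h => ?_, fun he => eul1_add (hx.2.1 he) (hy.2.1 he),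
    fun he => eul2_add (hx.2.2 he) (hy.2.2 he)⟩
  have : x T a + y T a ≠ 0 := by simpa using h
  rcases ne_or_eq (x T a) 0 with h' | h'
  · exact hx.1 T a h'
  · refine hy.1 T a fun h'' => this (by rw [h', h'', add_zero])

lemma gsect_smul {e₁ e₂ : Bool} {d : ℤ} {p q : ℕ} {S : Finset (Fin (n + 1))}
    (c : ℂ) {x : Form n p q} (hx : GSect e₁ e₂ d p q S x) :
    GSect e₁ e₂ d p q S (c • x) := by
  refine ⟨fun T a h => ?_, fun he => eul1_smul c (hx.2.1 he), fun he => eul2_smul c (hx.2.2 he)⟩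
  have : c * x T a ≠ 0 := by simpa using h
  exact hx.1 T a (right_ne_zero_of_mul this)

lemma gsect_neg {e₁ e₂ : Bool} {d : ℤ} {p q : ℕ} {S : Finset (Fin (n + 1))}
    {x : Form n p q} (hx : GSect e₁ e₂ d p q S x) : GSect e₁ e₂ d p q S (-x) := by
  have := gsect_smul (-1 : ℂ) hx
  have hneg : (-1 : ℂ) • x = -x := by funext T; simp
  rwa [hneg] at this

lemma gsect_sub {e₁ e₂ : Bool} {d : ℤ} {p q : ℕ} {S : Finset (Fin (n + 1))}
    {x y : Form n p q} (hx : GSect e₁ e₂ d p q S x) (hy : GSect e₁ e₂ d p q S y) :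
    GSect e₁ e₂ d p q S (x - y) := by
  have := gsect_add hx (gsect_neg hy)
  simpa [sub_eq_add_neg] using this

lemma gsect_sum {e₁ e₂ : Bool} {d : ℤ} {p q : ℕ} {S : Finset (Fin (n + 1))}
    {ι : Type*} (t : Finset ι) (f : ι → Form n p q)
    (hf : ∀ i ∈ t, GSect e₁ e₂ d p q S (f i)) :
    GSect e₁ e₂ d p q S (∑ i ∈ t, f i) := by
  classical
  induction t using Finset.induction_on with
  | empty => simpa using (gsect_zero : GSect e₁ e₂ d p q S (0 : Form n p q))
  | insert _ _ hnot ih =>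
    rw [Finset.sum_insert hnot]
    exact gsect_add (hf _ (Finset.mem_insert_self _ _))
      (ih fun i hi => hf i (Finset.mem_insert_of_mem hi))

lemma gsect_mono {e₁ e₂ : Bool} {d : ℤ} {p q : ℕ} {S S' : Finset (Fin (n + 1))}
    (hS : S ⊆ S') {x : Form n p q} (hx : GSect e₁ e₂ d p q S x) :
    GSect e₁ e₂ d p q S' x := by
  refine ⟨fun T a h => ⟨fun i hi => (hx.1 T a h).1 i fun hc => hi (hS hc), (hx.1 T a h).2⟩,
    hx.2.1, hx.2.2⟩

/-! ### Generalized cochains, coboundaries, vanishing, generators -/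

def GIsCochain (e₁ e₂ : Bool) (d : ℤ) {p q k : ℕ} (ω : Cochain n p q k) : Prop :=
  ∀ S, GSect e₁ e₂ d p q S.1 (ω S)

def GIsCoboundary (e₁ e₂ : Bool) (d : ℤ) {p q : ℕ} :
    ∀ {k : ℕ}, Cochain n p q k → Prop
  | 0, ω => ω = 0
  | _ + 1, ω => ∃ η, GIsCochain e₁ e₂ d η ∧ cechD η = ω

def GVan (N : ℕ) (e₁ e₂ : Bool) (d : ℤ) (p q k : ℕ) : Prop :=
  ∀ ω : Cochain N p q k, GIsCochain e₁ e₂ d ω → cechD ω = 0 → GIsCoboundary e₁ e₂ d ω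

def GGen (N : ℕ) (e₁ e₂ : Bool) (d : ℤ) (p q k : ℕ) : Prop :=
  ∃ ω₀ : Cochain N p q k, GIsCochain e₁ e₂ d ω₀ ∧ cechD ω₀ = 0 ∧
    (∀ c : ℂ, GIsCoboundary e₁ e₂ d (c • ω₀) → c = 0) ∧
    (∀ ω : Cochain N p q k, GIsCochain e₁ e₂ d ω → cechD ω = 0 →
      ∃ c : ℂ, GIsCoboundary e₁ e₂ d (ω - c • ω₀))

lemma gcochain_cechD {e₁ e₂ : Bool} {d : ℤ} {p q k : ℕ} {η : Cochain n p q k}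
    (h : GIsCochain e₁ e₂ d η) : GIsCochain e₁ e₂ d (cechD η) := by
  intro S
  unfold cechD
  refine gsect_sum _ _ fun i _ => ?_
  refine gsect_smul _ (gsect_mono ?_ (h _))
  exact Finset.erase_subset _ _

/-! ### Flag conversions -/

lemma eul1_of_p_zero {q : ℕ} (x : Form n 0 q) : Eul1 0 q x := by
  intro U hU; omega

lemma eul2_of_q_zero {p : ℕ} (x : Form n p 0) : Eul2 p 0 x := by
  intro T₁ U hU; omega

lemma gsect_p_zero_iff {e₁ e₂ : Bool} {d : ℤ} {q : ℕ} {S : Finset (Fin (n + 1))}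
    (x : Form n 0 q) : GSect e₁ e₂ d 0 q S x ↔ GSect false e₂ d 0 q S x := by
  constructor
  · rintro ⟨h1, _, h3⟩; exact ⟨h1, fun he => by simp at he, h3⟩
  · rintro ⟨h1, _, h3⟩; exact ⟨h1, fun _ => eul1_of_p_zero x, h3⟩

lemma gsect_q_zero_iff {e₁ e₂ : Bool} {d : ℤ} {p : ℕ} {S : Finset (Fin (n + 1))}
    (x : Form n p 0) : GSect e₁ e₂ d p 0 S x ↔ GSect e₁ false d p 0 S x := by
  constructor
  · rintro ⟨h1, h2, _⟩; exact ⟨h1, h2, fun he => by simp at he⟩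
  · rintro ⟨h1, h2, _⟩; exact ⟨h1, h2, fun _ => eul2_of_q_zero x⟩

lemma gvan_congr {e₁ e₂ f₁ f₂ : Bool} {d d' : ℤ} {p q : ℕ}
    (h : ∀ (S : Finset (Fin (n + 1))) (x : Form n p q),
      GSect e₁ e₂ d p q S x ↔ GSect f₁ f₂ d' p q S x) (k : ℕ) :
    GVan n e₁ e₂ d p q k ↔ GVan n f₁ f₂ d' p q k := by
  have hco : ∀ {k' : ℕ} (ω : Cochain n p q k'), GIsCochain e₁ e₂ d ω ↔ GIsCochain f₁ f₂ d' ω :=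
    fun ω => forall_congr' fun S => h _ _
  have hcb : ∀ {k' : ℕ} (ω : Cochain n p q k'),
      GIsCoboundary e₁ e₂ d ω ↔ GIsCoboundary f₁ f₂ d' ω := by
    intro k' ω
    match k' with
    | 0 => exact Iff.rfl
    | k' + 1 =>
      exact exists_congr fun η => and_congr (hco η) Iff.rfl
  constructor
  · intro hv ω hω hd0
    exact (hcb ω).mp (hv ω ((hco ω).mpr hω) hd0)
  · intro hv ω hω hd0
    exact (hcb ω).mpr (hv ω ((hco ω).mp hω) hd0)

lemma ggen_congr {e₁ e₂ f₁ f₂ : Bool} {d d' : ℤ} {p q : ℕ}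
    (h : ∀ (S : Finset (Fin (n + 1))) (x : Form n p q),
      GSect e₁ e₂ d p q S x ↔ GSect f₁ f₂ d' p q S x) (k : ℕ) :
    GGen n e₁ e₂ d p q k ↔ GGen n f₁ f₂ d' p q k := by
  have hco : ∀ {k' : ℕ} (ω : Cochain n p q k'), GIsCochain e₁ e₂ d ω ↔ GIsCochain f₁ f₂ d' ω :=
    fun ω => forall_congr' fun S => h _ _
  have hcb : ∀ {k' : ℕ} (ω : Cochain n p q k'),
      GIsCoboundary e₁ e₂ d ω ↔ GIsCoboundary f₁ f₂ d' ω := by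
    intro k' ω
    match k' with
    | 0 => exact Iff.rfl
    | k' + 1 =>
      exact exists_congr fun η => and_congr (hco η) Iff.rfl
  unfold GGen
  refine exists_congr fun ω₀ => ?_
  rw [hco ω₀]
  refine and_congr Iff.rfl (and_congr Iff.rfl (and_congr ?_ ?_))
  · exact forall_congr' fun c => imp_congr (hcb _) Iff.rfl
  · refine forall_congr' fun ω => ?_
    rw [hco ω]
    exact imp_congr Iff.rfl (imp_congr Iff.rfl (exists_congr fun c => hcb _))

/-! ### Base case: cohomology of twists of `O` (no Euler conditions) -/

lemma cocycle_eval {p q k : ℕ} {ω : Cochain n p q k} (hc : cechD ω = 0)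
    (s : Finset (Fin (n + 1))) (hs : s.card = k + 2) (T : _) (a : _) :
    ∑ i ∈ s, eps i s * rc ω (s.erase i) T a = 0 := by
  have h1 : cechD ω ⟨s, hs⟩ T a = (0 : Cochain n p q (k + 1)) ⟨s, hs⟩ T a := by rw [hc]
  rw [cechD_apply ω s hs T a] at h1
  simpa using h1

/-- A choice of an index with nonnegative exponent. -/
noncomputable def pick (a : Fin (n + 1) → ℤ) : Fin (n + 1) :=
  if h : ∃ i, 0 ≤ a i then h.choose else 0

lemma pick_spec {a : Fin (n + 1) → ℤ} (h : ∃ i, 0 ≤ a i) : 0 ≤ a (pick a) := by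
  rw [pick, dif_pos h]; exact h.choose_spec

lemma exists_nonneg {d : ℤ} (hd : -(n : ℤ) ≤ d) {a : Fin (n + 1) → ℤ}
    (ha : (∑ i, a i) = d) : ∃ i, 0 ≤ a i := by
  by_contra h
  push_neg at h
  have h1 : (∑ i, a i) ≤ ∑ _i : Fin (n + 1), (-1 : ℤ) :=
    Finset.sum_le_sum fun i _ => by have := h i; omega
  rw [Finset.sum_const, Finset.card_univ, Fintype.card_fin, ha, nsmul_eq_mul] at h1
  push_cast at h1
  linarith

/-- The Čech homotopy: contract along `pick a` in each monomial degree. -/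
noncomputable def homot {p q k : ℕ} (ω : Cochain n p q (k + 1)) : Cochain n p q k :=
  fun S T => ∑ i ∈ (S.1ᶜ).attach, eps i.1 S.1 •
    Finsupp.filter (fun a => pick a = i.1) (ω ⟨insert i.1 S.1, by
      rw [card_insert_of_notMem (Finset.mem_compl.mp i.2), S.2]⟩ T)

lemma homot_apply {p q k : ℕ} (ω : Cochain n p q (k + 1)) (s : Finset (Fin (n + 1)))
    (hs : s.card = k + 1) (T : _) (a : _) :
    homot ω ⟨s, hs⟩ T a =
      if pick a ∈ sᶜ then eps (pick a) s * rc ω (insert (pick a) s) T a else 0 := by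
  unfold homot
  rw [Finsupp.finset_sum_apply]
  have step : ∀ i ∈ (sᶜ).attach,
      (eps i.1 s • Finsupp.filter (fun a => pick a = i.1) (ω ⟨insert i.1 s, by
        rw [card_insert_of_notMem (Finset.mem_compl.mp i.2), hs]⟩ T)) a
      = if pick a = i.1 then eps i.1 s * rc ω (insert i.1 s) T a else 0 := by
    intro i _
    rw [Finsupp.smul_apply, Finsupp.filter_apply, smul_eq_mul, mul_ite, mul_zero]
    split_ifs with h
    · rw [rc_eq ω (by rw [card_insert_of_notMem (Finset.mem_compl.mp i.2), hs])]
    · rfl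
  rw [Finset.sum_congr rfl step,
    Finset.sum_attach sᶜ (fun i => if pick a = i then eps i s * rc ω (insert i s) T a else 0),
    Finset.sum_ite_eq]

lemma homot_cochain {d : ℤ} {p q k : ℕ} {ω : Cochain n p q (k + 1)}
    (hd : -(n : ℤ) ≤ d) (hω : GIsCochain false false d ω) :
    GIsCochain false false d (homot ω) := by
  rintro ⟨s, hs⟩
  refine ⟨fun T a hne => ?_, fun h => by simp at h, fun h => by simp at h⟩
  rw [homot_apply ω s hs T a] at hne
  by_cases hp : pick a ∈ sᶜ
  · rw [if_pos hp] at hne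
    have hrc : rc ω (insert (pick a) s) T a ≠ 0 := fun h => hne (by rw [h, mul_zero])
    have hcard : (insert (pick a) s).card = k + 2 := by
      rw [card_insert_of_notMem (Finset.mem_compl.mp hp), hs]
    rw [rc_eq ω hcard] at hrc
    have hsect := (hω ⟨insert (pick a) s, hcard⟩).1 T a hrc
    refine ⟨fun i hi => ?_, hsect.2⟩
    by_cases hip : i = pick a
    · subst hip
      exact pick_spec (exists_nonneg hd hsect.2)
    · exact hsect.1 i (by simp [Finset.mem_insert, hip, hi])
  · rw [if_neg hp] at hne
    exact absurd rfl hne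

lemma homot_d {d : ℤ} {p q k : ℕ} {ω : Cochain n p q (k + 1)}
    (hd : -(n : ℤ) ≤ d) (hω : GIsCochain false false d ω) (hc : cechD ω = 0) :
    cechD (homot ω) = ω := by
  refine cochain_ext fun s hs T a => ?_
  rw [cechD_apply (homot ω) s hs T a]
  have hrc : ∀ l ∈ s, rc (homot ω) (s.erase l) T a =
      if pick a ∈ (s.erase l)ᶜ then
        eps (pick a) (s.erase l) * rc ω (insert (pick a) (s.erase l)) T a else 0 := by
    intro l hl
    have hcard : (s.erase l).card = k + 1 := by
      rw [Finset.card_erase_of_mem hl, hs]; omega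
    rw [rc_eq (homot ω) hcard, homot_apply ω (s.erase l) hcard T a]
  by_cases hex : ∃ i, 0 ≤ a i
  · set i := pick a with hidef
    by_cases hi : i ∈ s
    · have hzero : ∀ l ∈ s, l ≠ i → eps l s * rc (homot ω) (s.erase l) T a = 0 := by
        intro l hl hne
        rw [hrc l hl, if_neg (by
          simp only [Finset.mem_compl, not_not, Finset.mem_erase]
          exact ⟨hne.symm, hi⟩)]
        ring
      rw [Finset.sum_eq_single_of_mem i hi hzero, hrc i hi,
        if_pos (Finset.mem_compl.mpr (Finset.notMem_erase i s)),
        eps_erase_self hi, Finset.insert_erase hi, rc_eq ω hs,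
        ← mul_assoc, eps_sq, one_mul]
    · have hcard : (insert i s).card = k + 3 := by
        rw [card_insert_of_notMem hi, hs]
      have hcy := cocycle_eval hc (insert i s) hcard T a
      rw [Finset.sum_insert hi, Finset.erase_insert hi, eps_insert_self hi] at hcy
      have hterm : ∀ l ∈ s, eps l (insert i s) * rc ω ((insert i s).erase l) T a
          = eps l (insert i s) * rc ω (insert i (s.erase l)) T a := by
        intro l hl
        rw [Finset.erase_insert_of_ne (fun he => hi (by rw [he]; exact hl))]
      rw [Finset.sum_congr rfl hterm] at hcy
      have hstep : ∀ l ∈ s, eps l s * rc (homot ω) (s.erase l) T a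
          = (- eps i s) * (eps l (insert i s) * rc ω (insert i (s.erase l)) T a) := by
        intro l hl
        have hne : l ≠ i := fun he => hi (by rw [← he]; exact hl)
        rw [hrc l hl, if_pos (Finset.mem_compl.mpr
          (fun hcon => hi (Finset.mem_of_mem_erase hcon)))]
        rw [eps_erase' hl i, eps_insert hi l, sw_antisymm hne.symm]
        ring
      rw [Finset.sum_congr rfl hstep, ← Finset.mul_sum]
      have hsum : ∑ l ∈ s, eps l (insert i s) * rc ω (insert i (s.erase l)) T a
          = - (eps i s * rc ω s T a) := by linear_combination hcy
      rw [hsum, rc_eq ω hs]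
      linear_combination (ω ⟨s, hs⟩ T a) * eps_sq i s
  · have hz : ∀ l ∈ s, eps l s * rc (homot ω) (s.erase l) T a = 0 := by
      intro l hl
      rw [hrc l hl]
      split_ifs with hp
      · rcases eq_or_ne (rc ω (insert (pick a) (s.erase l)) T a) 0 with h0 | h0
        · rw [h0]; ring
        · exfalso
          have hcard : (insert (pick a) (s.erase l)).card = k + 2 := by
            rw [card_insert_of_notMem (Finset.mem_compl.mp hp),
              Finset.card_erase_of_mem hl, hs]; omega
          rw [rc_eq ω hcard] at h0
          exact hex (exists_nonneg hd ((hω ⟨_, hcard⟩).1 T a h0).2)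
      · ring
    rw [Finset.sum_eq_zero hz]
    rcases eq_or_ne (ω ⟨s, hs⟩ T a) 0 with h0 | h0
    · rw [h0]
    · exact absurd (exists_nonneg hd ((hω ⟨s, hs⟩).1 T a h0).2) hex

theorem van_ff_pos {d : ℤ} (hd : -(n : ℤ) ≤ d) (p q k : ℕ) :
    GVan n false false d p q (k + 1) := by
  intro ω hω hc
  exact ⟨homot ω, homot_cochain hd hω, homot_d hd hω hc⟩

theorem van_ff_zero {d : ℤ} (hd : -(n : ℤ) ≤ d) (hd1 : d ≤ -1) (p q : ℕ) :
    GVan n false false d p q 0 := by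
  intro ω hω hc
  have hn : 1 ≤ n := by omega
  refine cochain_ext fun s hs T a => ?_
  have hz : ((0 : Cochain n p q 0) ⟨s, hs⟩) T a = 0 := rfl
  rw [hz]
  by_contra h0
  have hsect := (hω ⟨s, hs⟩).1 T a h0
  have hneg : ∃ j, a j < 0 := by
    by_contra hno
    push_neg at hno
    have : (0 : ℤ) ≤ ∑ i, a i := Finset.sum_nonneg fun i _ => hno i
    omega
  obtain ⟨j, hj⟩ := hneg
  have hjs : j ∈ s := by
    by_contra hjs
    have := hsect.1 j hjs
    omega
  obtain ⟨x, hx⟩ := Finset.card_eq_one.mp hs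
  have hjx : j = x := by
    rw [hx] at hjs
    exact Finset.mem_singleton.mp hjs
  subst hjx
  subst hx
  -- pick a second index r ≠ j
  have hr : ∃ r : Fin (n + 1), r ≠ j := by
    by_cases hj0 : (j : ℕ) = 0
    · refine ⟨⟨1, by omega⟩, fun hcon => ?_⟩
      have hv : (1 : ℕ) = (j : ℕ) := congrArg Fin.val hcon
      omega
    · refine ⟨⟨0, by omega⟩, fun hcon => ?_⟩
      have hv : (0 : ℕ) = (j : ℕ) := congrArg Fin.val hcon
      omega
  obtain ⟨r, hrj⟩ := hr
  have hrs : r ∉ ({j} : Finset (Fin (n + 1))) := by simp [hrj]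
  have hcard2 : (insert r {j} : Finset (Fin (n + 1))).card = 0 + 2 := by
    rw [card_insert_of_notMem hrs]; rfl
  have hcy := cocycle_eval hc (insert r {j}) hcard2 T a
  rw [Finset.sum_insert hrs, Finset.erase_insert hrs, Finset.sum_singleton] at hcy
  have he2 : (insert r ({j} : Finset (Fin (n + 1)))).erase j = {r} := by
    rw [Finset.erase_insert_of_ne hrj, Finset.erase_singleton]
    rfl
  have hr0 : rc ω {r} T a = 0 := by
    rcases eq_or_ne (rc ω {r} T a) 0 with h | h
    · exact h
    · exfalso
      rw [rc_eq ω (Finset.card_singleton r)] at h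
      have hle := ((hω ⟨{r}, Finset.card_singleton r⟩).1 T a h).1 j
        (by simp only [Finset.mem_singleton]; exact fun hcon => hrj hcon.symm)
      omega
  have hj1 : rc ω {j} T a = ω ⟨{j}, hs⟩ T a := rc_eq ω hs T a
  rw [he2, hr0, mul_zero, add_zero, hj1] at hcy
  exact h0 ((mul_eq_zero.mp hcy).resolve_left (eps_ne_zero r _))

/-! ### The slot-1 Euler contraction and its splitting -/

lemma sw_mul_antisymm {i l : Fin (n + 1)} (h : i ≠ l) : sw i l * sw l i = -1 := by
  unfold sw
  rcases lt_or_gt_of_ne h with h' | h'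
  · rw [if_pos h', if_neg (asymm h')]; try norm_num
  · rw [if_neg (asymm h'), if_pos h']; try norm_num

lemma single_sum (i : Fin (n + 1)) : (∑ l, single n i l) = 1 := by
  unfold single
  simp

lemma rf_add {p q : ℕ} (x y : Form n p q) (T₁ T₂ : Finset (Fin (n + 1))) (a : _) :
    rf (x + y) T₁ T₂ a = rf x T₁ T₂ a + rf y T₁ T₂ a := by
  unfold rf; split <;> simp

lemma rf_smul {p q : ℕ} (c : ℂ) (x : Form n p q) (T₁ T₂ : Finset (Fin (n + 1))) (a : _) :
    rf (c • x) T₁ T₂ a = c * rf x T₁ T₂ a := by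
  unfold rf; split <;> simp

/-- Contraction with the Euler vector field in the first slot. -/
noncomputable def contr1 {p q : ℕ} (x : Form n (p + 1) q) : Form n p q :=
  fun T => ∑ i ∈ (T.1.1ᶜ).attach, eps i.1 T.1.1 •
    Finsupp.mapDomain (· + single n i.1) (x (⟨insert i.1 T.1.1, by
      rw [card_insert_of_notMem (Finset.mem_compl.mp i.2), T.1.2]⟩, T.2))

lemma mapDomain_add_apply (L : Laurent n) (c b : Fin (n + 1) → ℤ) :
    Finsupp.mapDomain (· + c) L b = L (b - c) := by
  conv_lhs => rw [show b = (b - c) + c from (sub_add_cancel b c).symm]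
  exact Finsupp.mapDomain_apply (add_left_injective c) L _

lemma mapDomain_sub_apply (L : Laurent n) (c b : Fin (n + 1) → ℤ) :
    Finsupp.mapDomain (· - c) L b = L (b + c) := by
  conv_lhs => rw [show b = (b + c) - c from (add_sub_cancel_right b c).symm]
  exact Finsupp.mapDomain_apply sub_left_injective L _

lemma contr1_apply {p q : ℕ} (x : Form n (p + 1) q) (T : _) (b : _) :
    contr1 x T b = ∑ i ∈ (T.1.1)ᶜ, eps i T.1.1 * rf x (insert i T.1.1) T.2.1 (b - single n i) := by
  unfold contr1
  rw [Finsupp.finset_sum_apply]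
  have step : ∀ i ∈ (T.1.1ᶜ).attach,
      (eps i.1 T.1.1 • Finsupp.mapDomain (· + single n i.1) (x (⟨insert i.1 T.1.1, by
        rw [card_insert_of_notMem (Finset.mem_compl.mp i.2), T.1.2]⟩, T.2))) b
      = eps i.1 T.1.1 * rf x (insert i.1 T.1.1) T.2.1 (b - single n i.1) := by
    intro i _
    rw [Finsupp.smul_apply, smul_eq_mul, mapDomain_add_apply,
      rf_eq x (by rw [card_insert_of_notMem (Finset.mem_compl.mp i.2), T.1.2]) T.2.2]
  rw [Finset.sum_congr rfl step,
    Finset.sum_attach (T.1.1ᶜ) (fun i => eps i T.1.1 * rf x (insert i T.1.1) T.2.1 (b - single n i))]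

lemma rf_contr1 {p q : ℕ} (x : Form n (p + 1) q) {U T₂ : Finset (Fin (n + 1))}
    (hU : U.card = p) (hT₂ : T₂.card = q) (b : _) :
    rf (contr1 x) U T₂ b = ∑ i ∈ Uᶜ, eps i U * rf x (insert i U) T₂ (b - single n i) := by
  rw [rf_eq _ hU hT₂, contr1_apply]

lemma contr1_eq_zero_iff {p q : ℕ} (x : Form n (p + 1) q) :
    contr1 x = 0 ↔ Eul1 (p + 1) q x := by
  rw [eul1_iff]
  constructor
  · intro h U hU T₂ hT₂ b
    have hU' : U.card = p := by omega
    have := congrArg (fun y => y b) (congrFun h (⟨U, hU'⟩, ⟨T₂, hT₂⟩))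
    rw [contr1_apply] at this
    simpa using this
  · intro h
    funext T
    ext b
    rw [contr1_apply]
    have hz : ((0 : Form n p q) T) b = 0 := rfl
    rw [hz]
    exact h T.1.1 (by rw [T.1.2]) T.2.1 T.2.2 b

lemma contr1_add {p q : ℕ} (x y : Form n (p + 1) q) :
    contr1 (x + y) = contr1 x + contr1 y := by
  funext T
  ext b
  have hr : (contr1 x + contr1 y) T b = contr1 x T b + contr1 y T b := by simp
  rw [hr, contr1_apply, contr1_apply, contr1_apply, ← Finset.sum_add_distrib]
  refine Finset.sum_congr rfl fun i _ => ?_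
  rw [rf_add]
  ring

lemma contr1_smul {p q : ℕ} (c : ℂ) (x : Form n (p + 1) q) :
    contr1 (c • x) = c • contr1 x := by
  funext T
  ext b
  have hr : (c • contr1 x) T b = c * contr1 x T b := by simp
  rw [hr, contr1_apply, contr1_apply, Finset.mul_sum]
  refine Finset.sum_congr rfl fun i _ => ?_
  rw [rf_smul]
  ring

lemma contr1_eul1 {p q : ℕ} (x : Form n (p + 1 + 1) q) : Eul1 (p + 1) q (contr1 x) := by
  rw [eul1_iff]
  intro U hU T₂ hT₂ b
  have hU' : U.card = p := by omega
  have step : ∀ i ∈ Uᶜ, eps i U * rf (contr1 x) (insert i U) T₂ (b - single n i)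
      = ∑ l ∈ Uᶜ.erase i, eps i U * eps l (insert i U) *
          rf x (insert l (insert i U)) T₂ (b - single n i - single n l) := by
    intro i hi
    rw [rf_contr1 x (by rw [card_insert_of_notMem (Finset.mem_compl.mp hi), hU']) hT₂,
      Finset.compl_insert, Finset.mul_sum]
    refine Finset.sum_congr rfl fun l _ => ?_
    ring
  rw [Finset.sum_congr rfl step]
  refine sum_pair_antisymm Uᶜ _ fun i hi l hl hne => ?_
  have hiU : i ∉ U := Finset.mem_compl.mp hi
  have hlU : l ∉ U := Finset.mem_compl.mp hl
  rw [Finset.insert_comm l i U, sub_right_comm b (single n i) (single n l),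
    eps_insert hiU l, eps_insert hlU i, sw_antisymm hne]
  ring

lemma contr1_eul2 {p q : ℕ} {x : Form n (p + 1) q} (hx : Eul2 (p + 1) q x) :
    Eul2 p q (contr1 x) := by
  rw [eul2_iff]
  intro T₁ hT₁ U hU b
  have step : ∀ l ∈ Uᶜ, eps l U * rf (contr1 x) T₁ (insert l U) (b - single n l)
      = ∑ i ∈ T₁ᶜ, eps l U * eps i T₁ *
          rf x (insert i T₁) (insert l U) ((b - single n i) - single n l) := by
    intro l hl
    rw [rf_contr1 x hT₁ (by rw [card_insert_of_notMem (Finset.mem_compl.mp hl), hU]),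
      Finset.mul_sum]
    refine Finset.sum_congr rfl fun i _ => ?_
    rw [sub_right_comm b (single n l) (single n i)]
    ring
  rw [Finset.sum_congr rfl step, Finset.sum_comm]
  refine Finset.sum_eq_zero fun i hi => ?_
  have hsum := (eul2_iff x).mp hx (insert i T₁)
    (by rw [card_insert_of_notMem (Finset.mem_compl.mp hi), hT₁]) U hU (b - single n i)
  calc ∑ l ∈ Uᶜ, eps l U * eps i T₁ * rf x (insert i T₁) (insert l U) (b - single n i - single n l)
      = eps i T₁ * ∑ l ∈ Uᶜ, eps l U * rf x (insert i T₁) (insert l U) ((b - single n i) - single n l) := by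
        rw [Finset.mul_sum]; refine Finset.sum_congr rfl fun l _ => by ring
    _ = 0 := by rw [hsum, mul_zero]

lemma gsect_contr1 {e₂ : Bool} {d : ℤ} {p q : ℕ} {S : Finset (Fin (n + 1))}
    {x : Form n (p + 1) q} (hx : GSect false e₂ d (p + 1) q S x) :
    GSect true e₂ (d + 1) p q S (contr1 x) := by
  refine ⟨fun T b hb => ?_, fun _ => ?_, fun he => contr1_eul2 (hx.2.2 he)⟩
  · rw [contr1_apply] at hb
    obtain ⟨i, hi, hne⟩ := Finset.exists_ne_zero_of_sum_ne_zero hb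
    have hrf : rf x (insert i T.1.1) T.2.1 (b - single n i) ≠ 0 :=
      fun h => hne (by rw [h, mul_zero])
    have hcard : (insert i T.1.1).card = p + 1 := by
      rw [card_insert_of_notMem (Finset.mem_compl.mp hi), T.1.2]
    rw [rf_eq x hcard T.2.2] at hrf
    have hsect := hx.1 _ _ hrf
    constructor
    · intro l hl
      have h1 := hsect.1 l hl
      have h2 : (0 : ℤ) ≤ single n i l := by unfold single; split <;> omega
      have h3 : (b - single n i) l = b l - single n i l := rfl
      omega
    · have h1 := hsect.2
      have h2 : (∑ l, (b - single n i) l) = (∑ l, b l) - ∑ l, single n i l := by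
        rw [← Finset.sum_sub_distrib]; rfl
      rw [h2, single_sum] at h1
      omega
  · -- Eul1 of a contraction always holds (ι² = 0); need `p`-case analysis
    rcases p with _ | p'
    · exact eul1_of_p_zero _
    · exact contr1_eul1 x

/-- Wedging with `dx_i` (division by `x_i`) in the first slot: splits the contraction. -/
noncomputable def lift1 {p q : ℕ} (i : Fin (n + 1)) (c : Form n p q) : Form n (p + 1) q :=
  fun T => if h : i ∈ T.1.1 then eps i (T.1.1.erase i) •
    Finsupp.mapDomain (· - single n i) (c (⟨T.1.1.erase i, by
      rw [Finset.card_erase_of_mem h, T.1.2]; omega⟩, T.2)) else 0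

lemma lift1_val {p q : ℕ} (i : Fin (n + 1)) (c : Form n p q)
    (T : {T : Finset (Fin (n + 1)) // T.card = p + 1} × {T : Finset (Fin (n + 1)) // T.card = q})
    (h : i ∈ T.1.1) (a : _) :
    lift1 i c T a = eps i (T.1.1.erase i) * c (⟨T.1.1.erase i, by
      rw [Finset.card_erase_of_mem h, T.1.2]; omega⟩, T.2) (a + single n i) := by
  unfold lift1
  rw [dif_pos h, Finsupp.smul_apply, smul_eq_mul, mapDomain_sub_apply]

lemma lift1_val_zero {p q : ℕ} (i : Fin (n + 1)) (c : Form n p q)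
    (T : {T : Finset (Fin (n + 1)) // T.card = p + 1} × {T : Finset (Fin (n + 1)) // T.card = q})
    (h : i ∉ T.1.1) (a : _) : lift1 i c T a = 0 := by
  unfold lift1
  rw [dif_neg h]
  rfl

lemma rf_lift1_mem {p q : ℕ} (i : Fin (n + 1)) (c : Form n p q) {T₁ T₂ : Finset (Fin (n + 1))}
    (hT₁ : T₁.card = p + 1) (hT₂ : T₂.card = q) (h : i ∈ T₁) (a : _) :
    rf (lift1 i c) T₁ T₂ a = eps i (T₁.erase i) * rf c (T₁.erase i) T₂ (a + single n i) := by
  rw [rf_eq _ hT₁ hT₂, lift1_val i c _ h,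
    rf_eq c (by rw [Finset.card_erase_of_mem h, hT₁]; omega) hT₂]

lemma rf_lift1_not_mem {p q : ℕ} (i : Fin (n + 1)) (c : Form n p q) {T₁ T₂ : Finset (Fin (n + 1))}
    (hT₁ : T₁.card = p + 1) (hT₂ : T₂.card = q) (h : i ∉ T₁) (a : _) :
    rf (lift1 i c) T₁ T₂ a = 0 := by
  rw [rf_eq _ hT₁ hT₂, lift1_val_zero i c _ h]

lemma contr1_lift1 {p q : ℕ} (i : Fin (n + 1)) {c : Form n p q} (hc : Eul1 p q c) :
    contr1 (lift1 i c) = c := by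
  funext T
  obtain ⟨⟨U, hU⟩, T₂⟩ := T
  ext b
  rw [contr1_apply]
  by_cases hiU : i ∈ U
  · set U' := U.erase i with hU'def
    have hU'c : U'.card + 1 = p := by
      rw [hU'def, Finset.card_erase_of_mem hiU, hU]
      have : 1 ≤ U.card := Finset.card_pos.mpr ⟨i, hiU⟩
      omega
    have hins : insert i U' = U := Finset.insert_erase hiU
    have hiU' : i ∉ U' := Finset.notMem_erase i U
    have hkey := (eul1_iff c).mp hc U' hU'c T₂.1 T₂.2 (b + single n i)
    have hcompl : U'ᶜ = insert i Uᶜ := by rw [hU'def, Finset.compl_erase]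
    rw [hcompl, Finset.sum_insert (by simp [Finset.mem_compl, hiU]), hins,
      add_sub_cancel_right b (single n i)] at hkey
    have hstep : ∀ l ∈ Uᶜ, eps l U * rf (lift1 i c) (insert l U) T₂.1 (b - single n l)
        = (-(eps i U')) *
          (eps l U' * rf c (insert l U') T₂.1 (b + single n i - single n l)) := by
      intro l hl
      have hlU : l ∉ U := Finset.mem_compl.mp hl
      have hlne : l ≠ i := fun h => hlU (h ▸ hiU)
      have hine : i ≠ l := fun h => hlne h.symm
      have hlU' : l ∉ U' := fun hcon => hlU (Finset.mem_of_mem_erase hcon)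
      have hcard : (insert l U).card = p + 1 := by rw [card_insert_of_notMem hlU, hU]
      rw [rf_lift1_mem i c hcard T₂.2 (Finset.mem_insert_of_mem hiU) _]
      have her : (insert l U).erase i = insert l U' := by
        rw [hU'def, Finset.erase_insert_of_ne hlne]
      rw [her, sub_add_eq_add_sub]
      have h1 : eps l U = sw i l * eps l U' := by
        conv_lhs => rw [← hins]
        rw [eps_insert hiU' l]
      have h2 : eps i (insert l U') = sw l i * eps i U' := eps_insert hlU' i
      rw [h1, h2]
      linear_combination (eps l U' * eps i U' *
        rf c (insert l U') T₂.1 (b + single n i - single n l)) * sw_mul_antisymm hine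
    rw [Finset.sum_congr rfl hstep, ← Finset.mul_sum]
    have hsum : ∑ l ∈ Uᶜ, eps l U' * rf c (insert l U') T₂.1 (b + single n i - single n l)
        = -(eps i U' * rf c U T₂.1 b) := by linear_combination hkey
    rw [hsum, rf_eq c hU T₂.2]
    linear_combination (c (⟨U, hU⟩, T₂) b) * eps_sq i U'
  · have hzero : ∀ l ∈ Uᶜ, l ≠ i →
        eps l U * rf (lift1 i c) (insert l U) T₂.1 (b - single n l) = 0 := by
      intro l hl hne
      have hlU : l ∉ U := Finset.mem_compl.mp hl
      have hcard : (insert l U).card = p + 1 := by rw [card_insert_of_notMem hlU, hU]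
      rw [rf_lift1_not_mem i c hcard T₂.2 (by
        simp only [Finset.mem_insert]
        rintro (h | h)
        · exact hne h.symm
        · exact hiU h)]
      ring
    rw [Finset.sum_eq_single_of_mem i (Finset.mem_compl.mpr hiU) hzero]
    have hcard : (insert i U).card = p + 1 := by rw [card_insert_of_notMem hiU, hU]
    rw [rf_lift1_mem i c hcard T₂.2 (Finset.mem_insert_self i U) _,
      Finset.erase_insert hiU, sub_add_cancel b (single n i), rf_eq c hU T₂.2]
    linear_combination (c (⟨U, hU⟩, T₂) b) * eps_sq i U

lemma lift1_eul2 {p q : ℕ} (i : Fin (n + 1)) {c : Form n p q} (hc : Eul2 p q c) :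
    Eul2 (p + 1) q (lift1 i c) := by
  rw [eul2_iff]
  intro T₁ hT₁ U hU b
  by_cases hi : i ∈ T₁
  · have hp1 : 1 ≤ T₁.card := Finset.card_pos.mpr ⟨i, hi⟩
    have step : ∀ l ∈ Uᶜ, eps l U * rf (lift1 i c) T₁ (insert l U) (b - single n l)
        = eps i (T₁.erase i) *
          (eps l U * rf c (T₁.erase i) (insert l U) ((b + single n i) - single n l)) := by
      intro l hl
      have hcard2 : (insert l U).card = q := by
        rw [card_insert_of_notMem (Finset.mem_compl.mp hl)]; exact hU
      rw [rf_lift1_mem i c hT₁ hcard2 hi _, sub_add_eq_add_sub]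
      ring
    rw [Finset.sum_congr rfl step, ← Finset.mul_sum,
      (eul2_iff c).mp hc (T₁.erase i) (by rw [Finset.card_erase_of_mem hi, hT₁]; omega)
        U hU (b + single n i), mul_zero]
  · refine Finset.sum_eq_zero fun l hl => ?_
    have hcard2 : (insert l U).card = q := by
      rw [card_insert_of_notMem (Finset.mem_compl.mp hl)]; exact hU
    rw [rf_lift1_not_mem i c hT₁ hcard2 hi]
    ring

lemma gsect_lift1 {e₂ : Bool} {d : ℤ} {p q : ℕ} {S : Finset (Fin (n + 1))}
    (i : Fin (n + 1)) (hi : i ∈ S) {c : Form n p q}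
    (hc : GSect true e₂ (d + 1) p q S c) :
    GSect false e₂ d (p + 1) q S (lift1 i c) := by
  refine ⟨fun T a ha => ?_, fun h => by simp at h, fun he => lift1_eul2 i (hc.2.2 he)⟩
  by_cases him : i ∈ T.1.1
  · rw [lift1_val i c T him a] at ha
    have hcv : c (⟨T.1.1.erase i, by
        rw [Finset.card_erase_of_mem him, T.1.2]; omega⟩, T.2) (a + single n i) ≠ 0 :=
      fun h => ha (by rw [h, mul_zero])
    have hsect := hc.1 _ _ hcv
    constructor
    · intro l hl
      have hlne : l ≠ i := fun h => hl (h ▸ hi)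
      have h1 := hsect.1 l hl
      have h2 : (a + single n i) l = a l + single n i l := rfl
      have h3 : single n i l = 0 := by unfold single; rw [if_neg hlne]
      omega
    · have h1 := hsect.2
      have h2 : (∑ l, (a + single n i) l) = (∑ l, a l) + ∑ l, single n i l := by
        rw [← Finset.sum_add_distrib]; rfl
      rw [h2, single_sum] at h1
      omega
  · rw [lift1_val_zero i c T him a] at ha
    exact absurd rfl ha

/-! ### The slot-2 Euler contraction and its splitting -/

noncomputable def contr2 {p q : ℕ} (x : Form n p (q + 1)) : Form n p q :=
  fun T => ∑ i ∈ (T.2.1ᶜ).attach, eps i.1 T.2.1 •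
    Finsupp.mapDomain (· + single n i.1) (x (T.1, ⟨insert i.1 T.2.1, by
      rw [card_insert_of_notMem (Finset.mem_compl.mp i.2), T.2.2]⟩))

lemma contr2_apply {p q : ℕ} (x : Form n p (q + 1)) (T : _) (b : _) :
    contr2 x T b = ∑ i ∈ (T.2.1)ᶜ, eps i T.2.1 * rf x T.1.1 (insert i T.2.1) (b - single n i) := by
  unfold contr2
  rw [Finsupp.finset_sum_apply]
  have step : ∀ i ∈ (T.2.1ᶜ).attach,
      (eps i.1 T.2.1 • Finsupp.mapDomain (· + single n i.1) (x (T.1, ⟨insert i.1 T.2.1, by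
        rw [card_insert_of_notMem (Finset.mem_compl.mp i.2), T.2.2]⟩))) b
      = eps i.1 T.2.1 * rf x T.1.1 (insert i.1 T.2.1) (b - single n i.1) := by
    intro i _
    rw [Finsupp.smul_apply, smul_eq_mul, mapDomain_add_apply,
      rf_eq x T.1.2 (by rw [card_insert_of_notMem (Finset.mem_compl.mp i.2), T.2.2])]
  rw [Finset.sum_congr rfl step,
    Finset.sum_attach (T.2.1ᶜ) (fun i => eps i T.2.1 * rf x T.1.1 (insert i T.2.1) (b - single n i))]

lemma rf_contr2 {p q : ℕ} (x : Form n p (q + 1)) {T₁ U : Finset (Fin (n + 1))}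
    (hT₁ : T₁.card = p) (hU : U.card = q) (b : _) :
    rf (contr2 x) T₁ U b = ∑ i ∈ Uᶜ, eps i U * rf x T₁ (insert i U) (b - single n i) := by
  rw [rf_eq _ hT₁ hU, contr2_apply]

lemma contr2_eq_zero_iff {p q : ℕ} (x : Form n p (q + 1)) :
    contr2 x = 0 ↔ Eul2 p (q + 1) x := by
  rw [eul2_iff]
  constructor
  · intro h T₁ hT₁ U hU b
    have hU' : U.card = q := by omega
    have := congrArg (fun y => y b) (congrFun h (⟨T₁, hT₁⟩, ⟨U, hU'⟩))
    rw [contr2_apply] at this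
    simpa using this
  · intro h
    funext T
    ext b
    rw [contr2_apply]
    have hz : ((0 : Form n p q) T) b = 0 := rfl
    rw [hz]
    exact h T.1.1 T.1.2 T.2.1 (by rw [T.2.2]) b

lemma contr2_add {p q : ℕ} (x y : Form n p (q + 1)) :
    contr2 (x + y) = contr2 x + contr2 y := by
  funext T
  ext b
  have hr : (contr2 x + contr2 y) T b = contr2 x T b + contr2 y T b := by simp
  rw [hr, contr2_apply, contr2_apply, contr2_apply, ← Finset.sum_add_distrib]
  refine Finset.sum_congr rfl fun i _ => ?_
  rw [rf_add]
  ring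

lemma contr2_smul {p q : ℕ} (c : ℂ) (x : Form n p (q + 1)) :
    contr2 (c • x) = c • contr2 x := by
  funext T
  ext b
  have hr : (c • contr2 x) T b = c * contr2 x T b := by simp
  rw [hr, contr2_apply, contr2_apply, Finset.mul_sum]
  refine Finset.sum_congr rfl fun i _ => ?_
  rw [rf_smul]
  ring

lemma contr2_eul2 {p q : ℕ} (x : Form n p (q + 1 + 1)) : Eul2 p (q + 1) (contr2 x) := by
  rw [eul2_iff]
  intro T₁ hT₁ U hU b
  have hU' : U.card = q := by omega
  have step : ∀ i ∈ Uᶜ, eps i U * rf (contr2 x) T₁ (insert i U) (b - single n i)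
      = ∑ l ∈ Uᶜ.erase i, eps i U * eps l (insert i U) *
          rf x T₁ (insert l (insert i U)) (b - single n i - single n l) := by
    intro i hi
    rw [rf_contr2 x hT₁ (by rw [card_insert_of_notMem (Finset.mem_compl.mp hi), hU']),
      Finset.compl_insert, Finset.mul_sum]
    refine Finset.sum_congr rfl fun l _ => ?_
    ring
  rw [Finset.sum_congr rfl step]
  refine sum_pair_antisymm Uᶜ _ fun i hi l hl hne => ?_
  have hiU : i ∉ U := Finset.mem_compl.mp hi
  have hlU : l ∉ U := Finset.mem_compl.mp hl
  rw [Finset.insert_comm l i U, sub_right_comm b (single n i) (single n l),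
    eps_insert hiU l, eps_insert hlU i, sw_antisymm hne]
  ring

lemma gsect_contr2 {d : ℤ} {p q : ℕ} {S : Finset (Fin (n + 1))}
    {x : Form n p (q + 1)} (hx : GSect false false d p (q + 1) S x) :
    GSect false true (d + 1) p q S (contr2 x) := by
  refine ⟨fun T b hb => ?_, fun h => by simp at h, fun _ => ?_⟩
  · rw [contr2_apply] at hb
    obtain ⟨i, hi, hne⟩ := Finset.exists_ne_zero_of_sum_ne_zero hb
    have hrf : rf x T.1.1 (insert i T.2.1) (b - single n i) ≠ 0 :=
      fun h => hne (by rw [h, mul_zero])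
    have hcard : (insert i T.2.1).card = q + 1 := by
      rw [card_insert_of_notMem (Finset.mem_compl.mp hi), T.2.2]
    rw [rf_eq x T.1.2 hcard] at hrf
    have hsect := hx.1 _ _ hrf
    constructor
    · intro l hl
      have h1 := hsect.1 l hl
      have h2 : (0 : ℤ) ≤ single n i l := by unfold single; split <;> omega
      have h3 : (b - single n i) l = b l - single n i l := rfl
      omega
    · have h1 := hsect.2
      have h2 : (∑ l, (b - single n i) l) = (∑ l, b l) - ∑ l, single n i l := by
        rw [← Finset.sum_sub_distrib]; rfl
      rw [h2, single_sum] at h1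
      omega
  · rcases q with _ | q'
    · exact eul2_of_q_zero _
    · exact contr2_eul2 x

noncomputable def lift2 {p q : ℕ} (i : Fin (n + 1)) (c : Form n p q) : Form n p (q + 1) :=
  fun T => if h : i ∈ T.2.1 then eps i (T.2.1.erase i) •
    Finsupp.mapDomain (· - single n i) (c (T.1, ⟨T.2.1.erase i, by
      rw [Finset.card_erase_of_mem h, T.2.2]; omega⟩)) else 0

lemma lift2_val {p q : ℕ} (i : Fin (n + 1)) (c : Form n p q)
    (T : {T : Finset (Fin (n + 1)) // T.card = p} × {T : Finset (Fin (n + 1)) // T.card = q + 1})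
    (h : i ∈ T.2.1) (a : _) :
    lift2 i c T a = eps i (T.2.1.erase i) * c (T.1, ⟨T.2.1.erase i, by
      rw [Finset.card_erase_of_mem h, T.2.2]; omega⟩) (a + single n i) := by
  unfold lift2
  rw [dif_pos h, Finsupp.smul_apply, smul_eq_mul, mapDomain_sub_apply]

lemma lift2_val_zero {p q : ℕ} (i : Fin (n + 1)) (c : Form n p q)
    (T : {T : Finset (Fin (n + 1)) // T.card = p} × {T : Finset (Fin (n + 1)) // T.card = q + 1})
    (h : i ∉ T.2.1) (a : _) : lift2 i c T a = 0 := by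
  unfold lift2
  rw [dif_neg h]
  rfl

lemma rf_lift2_mem {p q : ℕ} (i : Fin (n + 1)) (c : Form n p q) {T₁ T₂ : Finset (Fin (n + 1))}
    (hT₁ : T₁.card = p) (hT₂ : T₂.card = q + 1) (h : i ∈ T₂) (a : _) :
    rf (lift2 i c) T₁ T₂ a = eps i (T₂.erase i) * rf c T₁ (T₂.erase i) (a + single n i) := by
  rw [rf_eq _ hT₁ hT₂, lift2_val i c _ h,
    rf_eq c hT₁ (by rw [Finset.card_erase_of_mem h, hT₂]; omega)]

lemma rf_lift2_not_mem {p q : ℕ} (i : Fin (n + 1)) (c : Form n p q) {T₁ T₂ : Finset (Fin (n + 1))}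
    (hT₁ : T₁.card = p) (hT₂ : T₂.card = q + 1) (h : i ∉ T₂) (a : _) :
    rf (lift2 i c) T₁ T₂ a = 0 := by
  rw [rf_eq _ hT₁ hT₂, lift2_val_zero i c _ h]

lemma contr2_lift2 {p q : ℕ} (i : Fin (n + 1)) {c : Form n p q} (hc : Eul2 p q c) :
    contr2 (lift2 i c) = c := by
  funext T
  obtain ⟨T₁, ⟨U, hU⟩⟩ := T
  ext b
  rw [contr2_apply]
  by_cases hiU : i ∈ U
  · set U' := U.erase i with hU'def
    have hU'c : U'.card + 1 = q := by
      rw [hU'def, Finset.card_erase_of_mem hiU, hU]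
      have : 1 ≤ U.card := Finset.card_pos.mpr ⟨i, hiU⟩
      omega
    have hins : insert i U' = U := Finset.insert_erase hiU
    have hiU' : i ∉ U' := Finset.notMem_erase i U
    have hkey := (eul2_iff c).mp hc T₁.1 T₁.2 U' hU'c (b + single n i)
    have hcompl : U'ᶜ = insert i Uᶜ := by rw [hU'def, Finset.compl_erase]
    rw [hcompl, Finset.sum_insert (by simp [Finset.mem_compl, hiU]), hins,
      add_sub_cancel_right b (single n i)] at hkey
    have hstep : ∀ l ∈ Uᶜ, eps l U * rf (lift2 i c) T₁.1 (insert l U) (b - single n l)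
        = (-(eps i U')) *
          (eps l U' * rf c T₁.1 (insert l U') (b + single n i - single n l)) := by
      intro l hl
      have hlU : l ∉ U := Finset.mem_compl.mp hl
      have hlne : l ≠ i := fun h => hlU (h ▸ hiU)
      have hine : i ≠ l := fun h => hlne h.symm
      have hlU' : l ∉ U' := fun hcon => hlU (Finset.mem_of_mem_erase hcon)
      have hcard : (insert l U).card = q + 1 := by rw [card_insert_of_notMem hlU, hU]
      rw [rf_lift2_mem i c T₁.2 hcard (Finset.mem_insert_of_mem hiU) _]
      have her : (insert l U).erase i = insert l U' := by
        rw [hU'def, Finset.erase_insert_of_ne hlne]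
      rw [her, sub_add_eq_add_sub]
      have h1 : eps l U = sw i l * eps l U' := by
        conv_lhs => rw [← hins]
        rw [eps_insert hiU' l]
      have h2 : eps i (insert l U') = sw l i * eps i U' := eps_insert hlU' i
      rw [h1, h2]
      linear_combination (eps l U' * eps i U' *
        rf c T₁.1 (insert l U') (b + single n i - single n l)) * sw_mul_antisymm hine
    rw [Finset.sum_congr rfl hstep, ← Finset.mul_sum]
    have hsum : ∑ l ∈ Uᶜ, eps l U' * rf c T₁.1 (insert l U') (b + single n i - single n l)
        = -(eps i U' * rf c T₁.1 U b) := by linear_combination hkey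
    rw [hsum, rf_eq c T₁.2 hU]
    linear_combination (c (T₁, ⟨U, hU⟩) b) * eps_sq i U'
  · have hzero : ∀ l ∈ Uᶜ, l ≠ i →
        eps l U * rf (lift2 i c) T₁.1 (insert l U) (b - single n l) = 0 := by
      intro l hl hne
      have hlU : l ∉ U := Finset.mem_compl.mp hl
      have hcard : (insert l U).card = q + 1 := by rw [card_insert_of_notMem hlU, hU]
      rw [rf_lift2_not_mem i c T₁.2 hcard (by
        simp only [Finset.mem_insert]
        rintro (h | h)
        · exact hne h.symm
        · exact hiU h)]
      ring
    rw [Finset.sum_eq_single_of_mem i (Finset.mem_compl.mpr hiU) hzero]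
    have hcard : (insert i U).card = q + 1 := by rw [card_insert_of_notMem hiU, hU]
    rw [rf_lift2_mem i c T₁.2 hcard (Finset.mem_insert_self i U) _,
      Finset.erase_insert hiU, sub_add_cancel b (single n i), rf_eq c T₁.2 hU]
    linear_combination (c (T₁, ⟨U, hU⟩) b) * eps_sq i U

lemma gsect_lift2 {d : ℤ} {p q : ℕ} {S : Finset (Fin (n + 1))}
    (i : Fin (n + 1)) (hi : i ∈ S) {c : Form n p q}
    (hc : GSect false true (d + 1) p q S c) :
    GSect false false d p (q + 1) S (lift2 i c) := by
  refine ⟨fun T a ha => ?_, fun h => by simp at h, fun h => by simp at h⟩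
  by_cases him : i ∈ T.2.1
  · rw [lift2_val i c T him a] at ha
    have hcv : c (T.1, ⟨T.2.1.erase i, by
        rw [Finset.card_erase_of_mem him, T.2.2]; omega⟩) (a + single n i) ≠ 0 :=
      fun h => ha (by rw [h, mul_zero])
    have hsect := hc.1 _ _ hcv
    constructor
    · intro l hl
      have hlne : l ≠ i := fun h => hl (h ▸ hi)
      have h1 := hsect.1 l hl
      have h2 : (a + single n i) l = a l + single n i l := rfl
      have h3 : single n i l = 0 := by unfold single; rw [if_neg hlne]
      omega
    · have h1 := hsect.2
      have h2 : (∑ l, (a + single n i) l) = (∑ l, a l) + ∑ l, single n i l := by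
        rw [← Finset.sum_add_distrib]; rfl
      rw [h2, single_sum] at h1
      omega
  · rw [lift2_val_zero i c T him a] at ha
    exact absurd rfl ha

/-! ### Transfer of vanishing and generators along a short exact sequence -/

section Transfer

variable {p₁ q₁ p₂ q₂ : ℕ} {eA₁ eA₂ eB₁ eB₂ eC₁ eC₂ : Bool} {d : ℤ}
variable {g : Form n p₁ q₁ → Form n p₂ q₂}
variable
  (hsect : ∀ S (x : Form n p₁ q₁),
    GSect eA₁ eA₂ d p₁ q₁ S x ↔ GSect eB₁ eB₂ d p₁ q₁ S x ∧ g x = 0)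
  (hadd : ∀ x y, g (x + y) = g x + g y)
  (hsmul : ∀ (c : ℂ) x, g (c • x) = c • g x)
  (hmap : ∀ S x, GSect eB₁ eB₂ d p₁ q₁ S x → GSect eC₁ eC₂ (d + 1) p₂ q₂ S (g x))
  (hlift : ∀ S : Finset (Fin (n + 1)), S.Nonempty → ∀ c,
    GSect eC₁ eC₂ (d + 1) p₂ q₂ S c → ∃ x, GSect eB₁ eB₂ d p₁ q₁ S x ∧ g x = c)

include hsmul in
lemma g_zero : g 0 = 0 := by
  have h := hsmul 0 0
  rw [zero_smul, zero_smul] at h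
  exact h

include hadd hsmul in
lemma g_sub (x y : Form n p₁ q₁) : g (x - y) = g x - g y := by
  have h : x - y = x + (-1 : ℂ) • y := by rw [neg_one_smul ℂ y, ← sub_eq_add_neg]
  rw [h, hadd, hsmul, neg_one_smul ℂ (g y), ← sub_eq_add_neg]

include hadd hsmul in
lemma gC_cechD {k : ℕ} (ω : Cochain n p₁ q₁ k) :
    (fun S => g (cechD ω S)) = cechD (fun S => g (ω S)) := by
  funext S
  show g (cechD ω S) = cechD (fun S => g (ω S)) S
  unfold cechD
  have gh : ∀ (t : Finset {x // x ∈ S.1}) (f : {x // x ∈ S.1} → Form n p₁ q₁),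
      g (∑ i ∈ t, f i) = ∑ i ∈ t, g (f i) := by
    intro t f
    classical
    induction t using Finset.induction_on with
    | empty => simpa using g_zero hsmul
    | insert _ _ hnot ih =>
      rw [Finset.sum_insert hnot, Finset.sum_insert hnot, hadd, ih]
  rw [gh]
  refine Finset.sum_congr rfl fun i _ => ?_
  rw [hsmul]

include hsect in
theorem transfer_van0 (hB0 : GVan n eB₁ eB₂ d p₁ q₁ 0) : GVan n eA₁ eA₂ d p₁ q₁ 0 := by
  intro ω hω hc
  exact hB0 ω (fun S => ((hsect S.1 (ω S)).mp (hω S)).1) hc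

include hsect hadd hsmul hmap hlift in
theorem transfer_van_succ (k : ℕ)
    (hBk : GVan n eB₁ eB₂ d p₁ q₁ (k + 1))
    (hCk : GVan n eC₁ eC₂ (d + 1) p₂ q₂ k) : GVan n eA₁ eA₂ d p₁ q₁ (k + 1) := by
  intro ω hω hc
  have hωB : GIsCochain eB₁ eB₂ d ω := fun S => ((hsect S.1 (ω S)).mp (hω S)).1
  obtain ⟨ψ, hψB, hdψ⟩ := hBk ω hωB hc
  have hgψ : GIsCochain eC₁ eC₂ (d + 1) (fun S => g (ψ S)) :=
    fun S => hmap S.1 (ψ S) (hψB S)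
  have hdgψ : cechD (fun S => g (ψ S)) = 0 := by
    rw [← gC_cechD hadd hsmul ψ]
    funext S
    show g (cechD ψ S) = (0 : Cochain n p₂ q₂ (k + 1)) S
    rw [congrFun hdψ S]
    exact ((hsect S.1 (ω S)).mp (hω S)).2
  cases k with
  | zero =>
    have h0 : (fun S => g (ψ S)) = 0 := hCk _ hgψ hdgψ
    have hψA : GIsCochain eA₁ eA₂ d ψ := fun S =>
      (hsect S.1 (ψ S)).mpr ⟨hψB S, congrFun h0 S⟩
    exact ⟨ψ, hψA, hdψ⟩
  | succ k' =>
    obtain ⟨χ, hχC, hdχ⟩ := hCk _ hgψ hdgψ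
    have hne : ∀ S : {S : Finset (Fin (n + 1)) // S.card = k' + 1}, S.1.Nonempty := fun S =>
      Finset.card_pos.mp (by rw [S.2]; omega)
    choose χh hχhB hgχh using fun S => hlift S.1 (hne S) (χ S) (hχC S)
    have hψ'B : GIsCochain eB₁ eB₂ d (ψ - cechD χh) := fun S =>
      gsect_sub (hψB S) (gcochain_cechD hχhB S)
    have hgψ' : ∀ S, g ((ψ - cechD χh) S) = 0 := by
      intro S
      show g (ψ S - cechD χh S) = 0
      rw [g_sub hadd hsmul]
      have h2 := congrFun (gC_cechD hadd hsmul χh) S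
      have h3 : (fun S => g (χh S)) = χ := funext hgχh
      rw [h2, h3, congrFun hdχ S, sub_self]
    have hψ'A : GIsCochain eA₁ eA₂ d (ψ - cechD χh) := fun S =>
      (hsect S.1 _).mpr ⟨hψ'B S, hgψ' S⟩
    refine ⟨ψ - cechD χh, hψ'A, ?_⟩
    rw [cechD_sub, cechD_cechD, sub_zero, hdψ]

include hsect hadd hsmul hmap hlift in
theorem transfer_gen (k : ℕ)
    (hBk1 : GVan n eB₁ eB₂ d p₁ q₁ (k + 1))
    (hBk : GVan n eB₁ eB₂ d p₁ q₁ k)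
    (hCgen : GGen n eC₁ eC₂ (d + 1) p₂ q₂ k) : GGen n eA₁ eA₂ d p₁ q₁ (k + 1) := by
  obtain ⟨γ, hγco, hγcy, hγnb, hγspan⟩ := hCgen
  have hne : ∀ S : {S : Finset (Fin (n + 1)) // S.card = k + 1}, S.1.Nonempty := fun S =>
    Finset.card_pos.mp (by rw [S.2]; omega)
  choose β hβB hgβ using fun S => hlift S.1 (hne S) (γ S) (hγco S)
  have hβBc : GIsCochain eB₁ eB₂ d β := hβB
  have hαB : GIsCochain eB₁ eB₂ d (cechD β) := gcochain_cechD hβBc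
  have hgα : ∀ S, g (cechD β S) = 0 := by
    intro S
    have h2 := congrFun (gC_cechD hadd hsmul β) S
    have h3 : (fun S => g (β S)) = γ := funext hgβ
    rw [h2, h3, congrFun hγcy S]
    rfl
  have hαA : GIsCochain eA₁ eA₂ d (cechD β) := fun S =>
    (hsect S.1 _).mpr ⟨hαB S, hgα S⟩
  refine ⟨cechD β, hαA, cechD_cechD β, ?_, ?_⟩
  · intro c hcb
    obtain ⟨θ, hθA, hdθ⟩ := hcb
    have hθB : GIsCochain eB₁ eB₂ d θ := fun S => ((hsect S.1 (θ S)).mp (hθA S)).1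
    have hgθ : ∀ S, g (θ S) = 0 := fun S => ((hsect S.1 (θ S)).mp (hθA S)).2
    have hδB : GIsCochain eB₁ eB₂ d (c • β - θ) := fun S =>
      gsect_sub (gsect_smul c (hβB S)) (hθB S)
    have hδcy : cechD (c • β - θ) = 0 := by
      rw [cechD_sub, cechD_smul, hdθ, sub_self]
    have hgδ : ∀ S, g ((c • β - θ) S) = c • γ S := by
      intro S
      show g (c • β S - θ S) = c • γ S
      rw [g_sub hadd hsmul, hsmul, hgβ, hgθ S, sub_zero]
    have hδcb := hBk _ hδB hδcy
    apply hγnb c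
    cases k with
    | zero =>
      have hδ0 : c • β - θ = 0 := hδcb
      show c • γ = 0
      funext S
      show c • γ S = (0 : Cochain n p₂ q₂ 0) S
      rw [← hgδ S, congrFun hδ0 S]
      show g 0 = _
      rw [g_zero hsmul]
      rfl
    | succ k'' =>
      obtain ⟨ψ, hψB, hdψ⟩ := hδcb
      refine ⟨fun S => g (ψ S), fun S => hmap S.1 _ (hψB S), ?_⟩
      rw [← gC_cechD hadd hsmul ψ]
      funext S
      show g (cechD ψ S) = (c • γ) S
      rw [congrFun hdψ S]
      exact hgδ S
  · intro ω hωA hωcy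
    have hωB : GIsCochain eB₁ eB₂ d ω := fun S => ((hsect S.1 (ω S)).mp (hωA S)).1
    obtain ⟨ψ, hψB, hdψ⟩ := hBk1 ω hωB hωcy
    have hgψco : GIsCochain eC₁ eC₂ (d + 1) (fun S => g (ψ S)) :=
      fun S => hmap S.1 _ (hψB S)
    have hgψcy : cechD (fun S => g (ψ S)) = 0 := by
      rw [← gC_cechD hadd hsmul ψ]
      funext S
      show g (cechD ψ S) = (0 : Cochain n p₂ q₂ (k + 1)) S
      rw [congrFun hdψ S]
      exact ((hsect S.1 (ω S)).mp (hωA S)).2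
    obtain ⟨c, hccb⟩ := hγspan _ hgψco hgψcy
    refine ⟨c, ?_⟩
    cases k with
    | zero =>
      have h0 : (fun S => g (ψ S)) - c • γ = 0 := hccb
      refine ⟨ψ - c • β, fun S => ?_, ?_⟩
      · refine (hsect S.1 _).mpr ⟨gsect_sub (hψB S) (gsect_smul c (hβB S)), ?_⟩
        show g (ψ S - c • β S) = 0
        rw [g_sub hadd hsmul, hsmul, hgβ]
        have := congrFun h0 S
        simpa using this
      · rw [cechD_sub, cechD_smul, hdψ]
    | succ k'' =>
      obtain ⟨χ, hχC, hdχ⟩ := hccb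
      have hne' : ∀ S : {S : Finset (Fin (n + 1)) // S.card = k'' + 1}, S.1.Nonempty :=
        fun S => Finset.card_pos.mp (by rw [S.2]; omega)
      choose χh hχhB hgχh using fun S => hlift S.1 (hne' S) (χ S) (hχC S)
      refine ⟨ψ - c • β - cechD χh, fun S => ?_, ?_⟩
      · refine (hsect S.1 _).mpr
          ⟨gsect_sub (gsect_sub (hψB S) (gsect_smul c (hβB S))) (gcochain_cechD hχhB S), ?_⟩
        show g (ψ S - c • β S - cechD χh S) = 0
        rw [g_sub hadd hsmul, g_sub hadd hsmul, hsmul, hgβ]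
        have h2 := congrFun (gC_cechD hadd hsmul χh) S
        have h3 : (fun S => g (χh S)) = χ := funext hgχh
        rw [h2, h3, congrFun hdχ S]
        show g (ψ S) - c • γ S - ((fun S => g (ψ S)) S - (c • γ) S) = 0
        show g (ψ S) - c • γ S - (g (ψ S) - c • γ S) = 0
        rw [sub_self]
      · rw [cechD_sub, cechD_sub, cechD_smul, cechD_cechD, sub_zero, hdψ]

end Transfer

/-! ### Instantiation of the transfer for the two Euler sequences -/

section Steps

variable {e₂ : Bool} {d : ℤ} {p q : ℕ}

lemma hsect1 : ∀ (S : Finset (Fin (n + 1))) (x : Form n (p + 1) q),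
    GSect true e₂ d (p + 1) q S x ↔ GSect false e₂ d (p + 1) q S x ∧ contr1 x = 0 := by
  intro S x
  constructor
  · rintro ⟨h1, h2, h3⟩
    exact ⟨⟨h1, fun h => by simp at h, h3⟩, (contr1_eq_zero_iff x).mpr (h2 rfl)⟩
  · rintro ⟨⟨h1, _, h3⟩, h4⟩
    exact ⟨h1, fun _ => (contr1_eq_zero_iff x).mp h4, h3⟩

lemma hlift1 : ∀ S : Finset (Fin (n + 1)), S.Nonempty → ∀ c : Form n p q,
    GSect true e₂ (d + 1) p q S c →
    ∃ x : Form n (p + 1) q, GSect false e₂ d (p + 1) q S x ∧ contr1 x = c := by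
  intro S hS c hc
  exact ⟨lift1 hS.choose c, gsect_lift1 hS.choose hS.choose_spec hc,
    contr1_lift1 hS.choose (hc.2.1 rfl)⟩

theorem step1_van0 (hB0 : GVan n false e₂ d (p + 1) q 0) : GVan n true e₂ d (p + 1) q 0 :=
  transfer_van0 hsect1 hB0

theorem step1_van_succ (k : ℕ) (hBk : GVan n false e₂ d (p + 1) q (k + 1))
    (hCk : GVan n true e₂ (d + 1) p q k) : GVan n true e₂ d (p + 1) q (k + 1) :=
  transfer_van_succ hsect1 contr1_add contr1_smul (fun _ _ h => gsect_contr1 h) hlift1 k hBk hCk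

theorem step1_gen (k : ℕ) (hBk1 : GVan n false e₂ d (p + 1) q (k + 1))
    (hBk : GVan n false e₂ d (p + 1) q k)
    (hCgen : GGen n true e₂ (d + 1) p q k) : GGen n true e₂ d (p + 1) q (k + 1) :=
  transfer_gen hsect1 contr1_add contr1_smul (fun _ _ h => gsect_contr1 h) hlift1 k hBk1 hBk hCgen

lemma hsect2 : ∀ (S : Finset (Fin (n + 1))) (x : Form n p (q + 1)),
    GSect false true d p (q + 1) S x ↔ GSect false false d p (q + 1) S x ∧ contr2 x = 0 := by
  intro S x
  constructor
  · rintro ⟨h1, h2, h3⟩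
    exact ⟨⟨h1, h2, fun h => by simp at h⟩, (contr2_eq_zero_iff x).mpr (h3 rfl)⟩
  · rintro ⟨⟨h1, h2, _⟩, h4⟩
    exact ⟨h1, h2, fun _ => (contr2_eq_zero_iff x).mp h4⟩

lemma hlift2 : ∀ S : Finset (Fin (n + 1)), S.Nonempty → ∀ c : Form n p q,
    GSect false true (d + 1) p q S c →
    ∃ x : Form n p (q + 1), GSect false false d p (q + 1) S x ∧ contr2 x = c := by
  intro S hS c hc
  exact ⟨lift2 hS.choose c, gsect_lift2 hS.choose hS.choose_spec hc,
    contr2_lift2 hS.choose (hc.2.2 rfl)⟩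

theorem step2_van0 (hB0 : GVan n false false d p (q + 1) 0) : GVan n false true d p (q + 1) 0 :=
  transfer_van0 hsect2 hB0

theorem step2_van_succ (k : ℕ) (hBk : GVan n false false d p (q + 1) (k + 1))
    (hCk : GVan n false true (d + 1) p q k) : GVan n false true d p (q + 1) (k + 1) :=
  transfer_van_succ hsect2 contr2_add contr2_smul (fun _ _ h => gsect_contr2 h) hlift2 k hBk hCk

theorem step2_gen (k : ℕ) (hBk1 : GVan n false false d p (q + 1) (k + 1))
    (hBk : GVan n false false d p (q + 1) k)
    (hCgen : GGen n false true (d + 1) p q k) : GGen n false true d p (q + 1) (k + 1) :=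
  transfer_gen hsect2 contr2_add contr2_smul (fun _ _ h => gsect_contr2 h) hlift2 k hBk1 hBk hCgen

end Steps

/-! ### The generator of `H⁰(ℙⁿ, 𝒪)` -/

lemma eps_pair {x y : Fin (n + 1)} (h : x ≠ y) : eps x {x, y} = - eps y {x, y} := by
  unfold eps
  rcases lt_or_gt_of_ne h with h' | h'
  · have h1 : ({x, y} : Finset (Fin (n + 1))).filter (fun j => j < x) = ∅ := by
      rw [Finset.filter_insert, if_neg (lt_irrefl x), Finset.filter_singleton,
        if_neg (asymm h')]
    have h2 : ({x, y} : Finset (Fin (n + 1))).filter (fun j => j < y) = {x} := by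
      rw [Finset.filter_insert, if_pos h', Finset.filter_singleton, if_neg (lt_irrefl y)]
      simp
    rw [h1, h2]
    norm_num
  · have h1 : ({x, y} : Finset (Fin (n + 1))).filter (fun j => j < x) = {y} := by
      rw [Finset.filter_insert, if_neg (lt_irrefl x), Finset.filter_singleton, if_pos h']
    have h2 : ({x, y} : Finset (Fin (n + 1))).filter (fun j => j < y) = ∅ := by
      rw [Finset.filter_insert, if_neg (asymm h'), Finset.filter_singleton,
        if_neg (lt_irrefl y)]
    rw [h1, h2]
    norm_num

/-- The canonical generator of `H⁰`: the constant function `1`. -/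
noncomputable def genO : Cochain n 0 0 0 :=
  fun _ _ => Finsupp.single (0 : Fin (n + 1) → ℤ) (1 : ℂ)

lemma genO_cochain : GIsCochain (n := n) false false 0 genO := by
  rintro ⟨s, hs⟩
  refine ⟨fun T a h => ?_, fun h => by simp at h, fun h => by simp at h⟩
  have ha : a = 0 := by
    by_contra hne
    rw [show genO (⟨s, hs⟩ : {S : Finset (Fin (n + 1)) // S.card = 0 + 1}) T a
      = Finsupp.single (0 : Fin (n + 1) → ℤ) (1 : ℂ) a from rfl] at h
    rw [Finsupp.single_apply, if_neg (fun hcon => hne hcon.symm)] at h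
    exact h rfl
  subst ha
  refine ⟨fun i _ => ?_, ?_⟩ <;> simp

lemma genO_cocycle : cechD (genO (n := n)) = 0 := by
  refine cochain_ext fun s hs T a => ?_
  rw [cechD_apply _ s hs T a]
  have hstep : ∀ l ∈ s, eps l s * rc genO (s.erase l) T a
      = eps l s * Finsupp.single (0 : Fin (n + 1) → ℤ) (1 : ℂ) a := by
    intro l hl
    rw [rc_eq genO (by rw [Finset.card_erase_of_mem hl, hs])]
    rfl
  rw [Finset.sum_congr rfl hstep, ← Finset.sum_mul]
  obtain ⟨x, y, hxy, rfl⟩ := Finset.card_eq_two.mp hs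
  rw [Finset.sum_pair hxy, eps_pair hxy]
  show (-eps y {x, y} + eps y {x, y}) * _ = (0 : Cochain n 0 0 (0 + 1)) ⟨{x, y}, hs⟩ T a
  rw [neg_add_cancel, zero_mul]
  rfl

theorem gen_base : GGen n false false 0 0 0 0 := by
  classical
  have hS₀ : ({0} : Finset (Fin (n + 1))).card = 0 + 1 := by simp
  set S₀ : {S : Finset (Fin (n + 1)) // S.card = 0 + 1} := ⟨{0}, hS₀⟩ with hS₀def
  have hT₀1 : (∅ : Finset (Fin (n + 1))).card = 0 := rfl
  set T₀ : {T : Finset (Fin (n + 1)) // T.card = 0} × {T : Finset (Fin (n + 1)) // T.card = 0} :=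
    (⟨∅, hT₀1⟩, ⟨∅, hT₀1⟩) with hT₀def
  have hTuniq : ∀ T : {T : Finset (Fin (n + 1)) // T.card = 0} ×
      {T : Finset (Fin (n + 1)) // T.card = 0}, T = T₀ := by
    rintro ⟨⟨T₁, h₁⟩, ⟨T₂, h₂⟩⟩
    have e1 : T₁ = ∅ := Finset.card_eq_zero.mp h₁
    have e2 : T₂ = ∅ := Finset.card_eq_zero.mp h₂
    subst e1; subst e2
    rfl
  refine ⟨genO, genO_cochain, genO_cocycle, ?_, ?_⟩
  · intro c hcb
    have h0 : (c • genO (n := n)) = 0 := hcb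
    have h1 : (c • genO (n := n)) S₀ T₀ 0 = 0 := by rw [h0]; rfl
    have h2 : (c • genO (n := n)) S₀ T₀ 0 = c := by
      show (c • genO S₀ T₀) 0 = c
      rw [Finsupp.smul_apply, smul_eq_mul]
      show c * Finsupp.single (0 : Fin (n + 1) → ℤ) (1 : ℂ) 0 = c
      rw [Finsupp.single_eq_same, mul_one]
    rw [h2] at h1
    exact h1
  · intro ω hω hc
    refine ⟨ω S₀ T₀ 0, ?_⟩
    show ω - (ω S₀ T₀ 0) • genO = 0
    refine cochain_ext fun s hs T a => ?_
    have hz : ((0 : Cochain n 0 0 0) ⟨s, hs⟩) T a = 0 := rfl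
    rw [hz]
    show ω ⟨s, hs⟩ T a - ((ω S₀ T₀ 0) • genO ⟨s, hs⟩ T) a = 0
    rw [Finsupp.smul_apply, smul_eq_mul]
    have hTT : T = T₀ := hTuniq T
    subst hTT
    obtain ⟨x, hx⟩ := Finset.card_eq_one.mp (by rw [hs] : s.card = 1)
    subst hx
    by_cases ha : a = 0
    · subst ha
      have hone : genO (⟨{x}, hs⟩ : {S : Finset (Fin (n + 1)) // S.card = 0 + 1}) T₀ 0
          = 1 := by
        show Finsupp.single (0 : Fin (n + 1) → ℤ) (1 : ℂ) 0 = 1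
        rw [Finsupp.single_eq_same]
      show ω ⟨{x}, hs⟩ T₀ 0 - ω S₀ T₀ 0 * genO ⟨{x}, hs⟩ T₀ 0 = 0
      rw [hone, mul_one]
      by_cases hx0 : x = 0
      · subst hx0
        rw [sub_self]
      · -- connect via the pair {x, 0}
        have hx0s : (0 : Fin (n + 1)) ∉ ({x} : Finset (Fin (n + 1))) := by
          simp [Ne.symm hx0]
        have hcard2 : (insert (0 : Fin (n + 1)) {x} : Finset (Fin (n + 1))).card = 0 + 2 := by
          rw [card_insert_of_notMem hx0s]; rfl
        have hcy := cocycle_eval hc (insert 0 {x}) hcard2 T₀ 0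
        rw [Finset.sum_insert hx0s, Finset.erase_insert hx0s, Finset.sum_singleton,
          Finset.erase_insert_of_ne (Ne.symm hx0), Finset.erase_singleton] at hcy
        have hr1 : rc ω {x} T₀ 0 = ω ⟨{x}, hs⟩ T₀ 0 := rc_eq ω hs T₀ 0
        have hr2 : rc ω (insert (0 : Fin (n + 1)) ∅) T₀ 0 = ω S₀ T₀ 0 := by
          rw [rc_eq ω (by simp)]
          congr 1
        have hp := eps_pair (show (0 : Fin (n + 1)) ≠ x from Ne.symm hx0)
        rw [hr1, hr2] at hcy
        have heq : ω ⟨{x}, hs⟩ T₀ 0 = ω S₀ T₀ 0 := by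
          have hne := eps_ne_zero (0 : Fin (n + 1)) ({0, x} : Finset (Fin (n + 1)))
          have h5 : eps (0 : Fin (n + 1)) {0, x} * ω ⟨{x}, hs⟩ T₀ 0
              = eps (0 : Fin (n + 1)) {0, x} * ω S₀ T₀ 0 := by
            rw [hp] at hcy ⊢
            linear_combination hcy
          exact mul_left_cancel₀ hne h5
        rw [heq, sub_self]
    · -- a ≠ 0 : both terms vanish
      have hzero1 : Finsupp.single (0 : Fin (n + 1) → ℤ) (1 : ℂ) a = 0 := by
        rw [Finsupp.single_apply, if_neg (fun hcon => ha hcon.symm)]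
      show ω ⟨{x}, hs⟩ T₀ a - ω S₀ T₀ 0 * genO ⟨{x}, hs⟩ T₀ a = 0
      have hgz : genO (⟨{x}, hs⟩ : {S : Finset (Fin (n + 1)) // S.card = 0 + 1}) T₀ a = 0 :=
        hzero1
      rw [hgz, mul_zero, sub_zero]
      by_contra h0
      have hsect := (hω ⟨{x}, hs⟩).1 T₀ a h0
      have hxneg : a x < 0 := by
        rcases lt_or_ge (a x) 0 with h' | h'
        · exact h'
        · exfalso
          apply ha
          funext l
          have hnn : ∀ l, 0 ≤ a l := by
            intro l
            by_cases hlx : l = x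
            · subst hlx; exact h'
            · exact hsect.1 l (by simp [hlx])
          have hz2 : ∀ l ∈ Finset.univ, 0 ≤ a l := fun l _ => hnn l
          have := (Finset.sum_eq_zero_iff_of_nonneg hz2).mp hsect.2 l (Finset.mem_univ l)
          exact this
      -- find r ≠ x and use the cocycle relation on {r, x}
      have hr : ∃ r : Fin (n + 1), r ≠ x := by
        rcases Nat.eq_zero_or_pos n with hn | hn
        · exfalso
          subst hn
          have hall : (Finset.univ : Finset (Fin 1)) = {x} := by
            apply Finset.eq_of_subset_of_card_le
            · intro l _
              exact Finset.mem_singleton.mpr (Subsingleton.elim l x)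
            · simp
          rw [hall, Finset.sum_singleton] at hsect
          have := hsect.2
          omega
        · by_cases hx0 : (x : ℕ) = 0
          · refine ⟨⟨1, by omega⟩, fun hcon => ?_⟩
            have hv : (1 : ℕ) = (x : ℕ) := congrArg Fin.val hcon
            omega
          · refine ⟨⟨0, by omega⟩, fun hcon => ?_⟩
            have hv : (0 : ℕ) = (x : ℕ) := congrArg Fin.val hcon
            omega
      obtain ⟨r, hrx⟩ := hr
      have hrs : r ∉ ({x} : Finset (Fin (n + 1))) := by simp [hrx]
      have hcard2 : (insert r {x} : Finset (Fin (n + 1))).card = 0 + 2 := by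
        rw [card_insert_of_notMem hrs]; rfl
      have hcy := cocycle_eval hc (insert r {x}) hcard2 T₀ a
      rw [Finset.sum_insert hrs, Finset.erase_insert hrs, Finset.sum_singleton,
        Finset.erase_insert_of_ne hrx, Finset.erase_singleton] at hcy
      have hr0 : rc ω (insert r ∅) T₀ a = 0 := by
        rcases eq_or_ne (rc ω (insert r ∅) T₀ a) 0 with h' | h'
        · exact h'
        · exfalso
          have hcard1 : (insert r (∅ : Finset (Fin (n + 1)))).card = 0 + 1 := by simp
          rw [rc_eq ω hcard1] at h'
          have hle := ((hω ⟨insert r ∅, hcard1⟩).1 T₀ a h').1 x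
            (by
              simp only [Finset.mem_insert, Finset.notMem_empty, or_false]
              exact fun he => hrx he.symm)
          omega
      have hrx1 : rc ω {x} T₀ a = ω ⟨{x}, hs⟩ T₀ a := rc_eq ω hs T₀ a
      rw [hr0, mul_zero, add_zero, hrx1] at hcy
      exact h0 ((mul_eq_zero.mp hcy).resolve_left (eps_ne_zero r _))

/-! ### The induction chains -/

theorem acyc_ft : ∀ q : ℕ, ∀ d : ℤ, -(n : ℤ) ≤ d → d + q ≤ -1 → ∀ p k,
    GVan n false true d p q k := by
  intro q
  induction q with
  | zero =>
    intro d hd hd1 p k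
    rw [gvan_congr (fun S x => gsect_q_zero_iff x) k]
    cases k with
    | zero => exact van_ff_zero hd (by push_cast at hd1; omega) p 0
    | succ k' => exact van_ff_pos hd p 0 k'
  | succ q ih =>
    intro d hd hd1 p k
    have hd1' : d ≤ -1 := by push_cast at hd1; omega
    cases k with
    | zero => exact step2_van0 (van_ff_zero hd hd1' p (q + 1))
    | succ k' =>
      refine step2_van_succ k' (van_ff_pos hd p (q + 1) k') ?_
      exact ih (d + 1) (by omega) (by push_cast at hd1 ⊢; omega) p k'

theorem van_omega : ∀ q : ℕ, q ≤ n → ∀ k : ℕ, k ≠ q → GVan n false true (-(q : ℤ)) 0 q k := by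
  intro q
  induction q with
  | zero =>
    intro hq k hk
    rw [gvan_congr (fun S x => gsect_q_zero_iff x) k]
    cases k with
    | zero => exact absurd rfl hk
    | succ k' => exact van_ff_pos (by simp) 0 0 k'
  | succ q ih =>
    intro hq k hk
    cases k with
    | zero =>
      exact step2_van0 (van_ff_zero (by push_cast; omega) (by push_cast; omega) 0 (q + 1))
    | succ k' =>
      refine step2_van_succ k' (van_ff_pos (by push_cast; omega) 0 (q + 1) k') ?_
      have hthis := ih (by omega) k' (by omega)
      have hc : (-(q : ℤ)) = (-(((q + 1 : ℕ)) : ℤ)) + 1 := by push_cast; ring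
      rwa [hc] at hthis

theorem main_van : ∀ p q k : ℕ, p + q ≤ n → k ≠ p + q → GVan n true true (-(p + q : ℤ)) p q k := by
  intro p
  induction p with
  | zero =>
    intro q k hpq hk
    rw [gvan_congr (fun S x => gsect_p_zero_iff x) k]
    simp only [Nat.cast_zero, zero_add]
    exact van_omega q (by omega) k (by omega)
  | succ p ih =>
    intro q k hpq hk
    cases k with
    | zero =>
      refine step1_van0 (acyc_ft q _ ?_ ?_ (p + 1) 0)
      · push_cast; omega
      · push_cast; omega
    | succ k' =>
      refine step1_van_succ k' (acyc_ft q _ ?_ ?_ (p + 1) (k' + 1)) ?_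
      · push_cast; omega
      · push_cast; omega
      · have hthis := ih q k' (by omega) (by omega)
        have hc : (-((p : ℤ) + (q : ℤ))) = (-(((p + 1 : ℕ) : ℤ) + (q : ℤ))) + 1 := by
          push_cast; ring
        rwa [hc] at hthis

theorem gen_omega : ∀ q : ℕ, q ≤ n → GGen n false true (-(q : ℤ)) 0 q q := by
  intro q
  induction q with
  | zero =>
    intro _
    rw [ggen_congr (fun S x => gsect_q_zero_iff x) 0]
    simp only [Nat.cast_zero, neg_zero]
    exact gen_base
  | succ q ih =>
    intro hq
    have hBk1 : GVan n false false (-((q + 1 : ℕ) : ℤ)) 0 (q + 1) (q + 1) :=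
      van_ff_pos (by push_cast; omega) 0 (q + 1) q
    have hBk : GVan n false false (-((q + 1 : ℕ) : ℤ)) 0 (q + 1) q := by
      cases q with
      | zero => exact van_ff_zero (by push_cast; omega) (by norm_num) 0 1
      | succ q'' => exact van_ff_pos (by push_cast; omega) 0 (q'' + 2) q''
    refine step2_gen q hBk1 hBk ?_
    have hthis := ih (by omega)
    have hc : (-(q : ℤ)) = (-((q + 1 : ℕ) : ℤ)) + 1 := by push_cast; ring
    rwa [hc] at hthis

theorem main_gen : ∀ p q : ℕ, p + q ≤ n → GGen n true true (-(p + q : ℤ)) p q (p + q) := by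
  intro p
  induction p with
  | zero =>
    intro q hpq
    rw [ggen_congr (fun S x => gsect_p_zero_iff x) _]
    simp only [Nat.cast_zero, zero_add, Nat.zero_add]
    exact gen_omega q (by omega)
  | succ p ih =>
    intro q hpq
    have hk : p + 1 + q = (p + q) + 1 := by omega
    rw [hk]
    refine step1_gen (p + q) (acyc_ft q _ ?_ ?_ (p + 1) ((p + q) + 1))
      (acyc_ft q _ ?_ ?_ (p + 1) (p + q)) ?_
    · push_cast; omega
    · push_cast; omega
    · push_cast; omega
    · push_cast; omega
    · have hthis := ih q (by omega)
      have hc : (-((p : ℤ) + (q : ℤ))) = (-(((p + 1 : ℕ) : ℤ) + (q : ℤ))) + 1 := by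
        push_cast; ring
      rwa [hc] at hthis

/-! ### Conversion back to the original predicates -/

lemma iscochain_iff {p q k : ℕ} (ω : Cochain n p q k) :
    IsCochain n p q ω ↔ GIsCochain true true (-(p + q : ℤ)) ω :=
  forall_congr' fun S => isSection_iff S.1 (ω S)

lemma iscob_iff {p q : ℕ} : ∀ {k : ℕ} (ω : Cochain n p q k),
    IsCoboundary n p q ω ↔ GIsCoboundary true true (-(p + q : ℤ)) ω := by
  intro k ω
  match k with
  | 0 => exact Iff.rfl
  | k + 1 => exact exists_congr fun η => and_congr (iscochain_iff η) Iff.rfl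

/-- If `p + q ≤ n`, then `Ω^p_{ℙⁿ} ⊗ Ω^q_{ℙⁿ}` has the same cohomology as
`Ω^{p+q}_{ℙⁿ}`: its (Čech) cohomology vanishes in every degree `k ≠ p + q`, while
`H^{p+q}(ℙⁿ, Ω^p ⊗ Ω^q) ≅ ℂ`: there is a cocycle `ω₀` of degree `p + q`, not a
coboundary (nor any nonzero multiple of it), such that every degree-`(p+q)` cocycle is,
modulo coboundaries, a scalar multiple of `ω₀`. -/
theorem cohomology_tensor_forms (n p q : ℕ) (hpq : p + q ≤ n) :
    (∀ k : ℕ, k ≠ p + q → ∀ ω : Cochain n p q k, IsCochain n p q ω → cechD ω = 0 →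
      IsCoboundary n p q ω) ∧
    (∃ ω₀ : Cochain n p q (p + q), IsCochain n p q ω₀ ∧ cechD ω₀ = 0 ∧
      (∀ c : ℂ, IsCoboundary n p q (c • ω₀) → c = 0) ∧
      (∀ ω : Cochain n p q (p + q), IsCochain n p q ω → cechD ω = 0 →
        ∃ c : ℂ, IsCoboundary n p q (ω - c • ω₀))) := by
  constructor
  · intro k hk ω hω hc
    exact (iscob_iff ω).mpr
      (main_van p q k hpq hk ω ((iscochain_iff ω).mp hω) hc)
  · obtain ⟨ω₀, hco, hcy, hnb, hspan⟩ := main_gen (n := n) p q hpq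
    refine ⟨ω₀, (iscochain_iff ω₀).mpr hco, hcy, ?_, ?_⟩
    · intro c hcb
      exact hnb c ((iscob_iff _).mp hcb)
    · intro ω hω hc
      obtain ⟨c, hcb⟩ := hspan ω ((iscochain_iff ω).mp hω) hc
      exact ⟨c, (iscob_iff _).mpr hcb⟩

end TensorForms
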